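/- arXiv:2509.18940 — 4 statements merged into one kernel-verified Lean document; each statement's English description precedes it below -/
import Mathlib

section
/- For every integer k ≥ 2 there exist a finite simple graph G with maximum degree k, a subgraph H of G with maximum degree k−1, and a total-(2k)-coloring φ of H in G such that φ cannot be extended to a total-(2k)-coloring of G. (Hence the palette size 2Δ+1 in the greedy total-coloring extension bound cannot be reduced to 2Δ, and the bound Δ+d+2 cannot be reduced to Δ+d+1 when H has maximum degree d.) -/
open SimpleGraph

/-- `fv`/`fe` form a (proper) total coloring of `G`. -/
def IsTotalColoring {V α : Type*} (G : SimpleGraph V)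
    (fv : V → α) (fe : Sym2 V → α) : Prop :=
  (∀ ⦃u v⦄, G.Adj u v → fv u ≠ fv v) ∧
  (∀ ⦃u v w⦄, G.Adj u v → G.Adj u w → v ≠ w → fe s(u, v) ≠ fe s(u, w)) ∧
  (∀ ⦃u v⦄, G.Adj u v → fe s(u, v) ≠ fv u)

/-- `fv`/`fe` form a total coloring of the subgraph `H` in `G`. -/
def IsTotalColoringInG {V α : Type*} (G : SimpleGraph V) (H : G.Subgraph)
    (fv : V → α) (fe : Sym2 V → α) : Prop :=
  (∀ ⦃u v⦄, u ∈ H.verts → v ∈ H.verts → G.Adj u v → fv u ≠ fv v) ∧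
  (∀ ⦃u v w⦄, H.Adj u v → H.Adj u w → v ≠ w → fe s(u, v) ≠ fe s(u, w)) ∧
  (∀ ⦃u v⦄, H.Adj u v → fe s(u, v) ≠ fv u)

open SimpleGraph

abbrev Vt (k : ℕ) : Type := Option (Fin k × Option (Fin (k - 1)))

def skipc (i j : ℕ) : ℕ := if j < i then j else j + 1

lemma skipc_inj {i j j' : ℕ} (h : skipc i j = skipc i j') : j = j' := by
  unfold skipc at h; split_ifs at h <;> omega

def grel (k : ℕ) (x y : Vt k) : Prop :=
  (x = none ∧ ∃ i, y = some (i, none)) ∨ ∃ i j, x = some (i, none) ∧ y = some (i, some j)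

def Gg (k : ℕ) : SimpleGraph (Vt k) where
  Adj x y := grel k x y ∨ grel k y x
  symm := ⟨fun x y h => h.symm⟩
  loopless := ⟨by
    rintro x ((⟨rfl, i, h⟩ | ⟨i, j, rfl, h⟩) | (⟨rfl, i, h⟩ | ⟨i, j, rfl, h⟩)) <;> simp_all [grel]⟩

lemma Gg_adj {k : ℕ} {x y : Vt k} : (Gg k).Adj x y ↔ grel k x y ∨ grel k y x := Iff.rfl

def hrel (k : ℕ) (x y : Vt k) : Prop := ∃ i j, x = some (i, none) ∧ y = some (i, some j)

def Hh (k : ℕ) : (Gg k).Subgraph where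
  verts := Set.univ
  Adj x y := hrel k x y ∨ hrel k y x
  adj_sub := fun h => h.imp Or.inr Or.inr
  edge_vert := fun _ => Set.mem_univ _
  symm := ⟨fun x y h => h.symm⟩

lemma Hh_adj {k : ℕ} {x y : Vt k} : (Hh k).Adj x y ↔ hrel k x y ∨ hrel k y x := Iff.rfl

def vcol (k : ℕ) : Vt k → ℕ
  | none => 2 * k - 1
  | some (i, none) => i
  | some (_, some _) => k

def pcol (k : ℕ) : Vt k → ℕ
  | some (i, some j) => skipc i j
  | _ => 0

lemma pcol_lt {k : ℕ} (hk : 1 ≤ k) (x : Vt k) : pcol k x < k := by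
  rcases x with _ | ⟨i, _ | j⟩
  · simp [pcol]; omega
  · simp [pcol]; omega
  · have hi := i.isLt; have hj := j.isLt
    simp only [pcol, skipc]; split_ifs <;> omega

lemma vcol_lt {k : ℕ} (hk : 1 ≤ k) (x : Vt k) : vcol k x < 2 * k := by
  rcases x with _ | ⟨i, _ | j⟩
  · simp only [vcol]; omega
  · have hi := i.isLt; simp only [vcol]; omega
  · simp only [vcol]; omega

def ecolF (k : ℕ) : Sym2 (Vt k) → ℕ :=
  Sym2.lift ⟨fun x y => pcol k x + pcol k y, fun _ _ => Nat.add_comm _ _⟩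

lemma ecolF_mk {k : ℕ} (x y : Vt k) : ecolF k s(x, y) = pcol k x + pcol k y := rfl

lemma ecolF_lt {k : ℕ} (hk : 1 ≤ k) (e : Sym2 (Vt k)) : ecolF k e < 2 * k := by
  induction e using Sym2.ind with
  | _ x y =>
    have := pcol_lt hk x; have := pcol_lt hk y
    rw [ecolF_mk]; omega

lemma range_ncard {α : Type} {n : ℕ} (f : Fin n → α) (hf : Function.Injective f) :
    (Set.range f).ncard = n := by
  rw [← Set.image_univ, Set.ncard_image_of_injective _ hf, Set.ncard_univ,
    Nat.card_eq_fintype_card, Fintype.card_fin]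

lemma nbG_none (k : ℕ) :
    (Gg k).neighborSet none = Set.range (fun i : Fin k => (some (i, none) : Vt k)) := by
  ext y
  simp only [mem_neighborSet, Gg_adj, grel, Set.mem_range]
  aesop

lemma nbG_v (k : ℕ) (i : Fin k) :
    (Gg k).neighborSet (some (i, none)) =
      insert none (Set.range (fun j : Fin (k - 1) => (some (i, some j) : Vt k))) := by
  ext y
  simp only [mem_neighborSet, Gg_adj, grel, Set.mem_insert_iff, Set.mem_range]
  aesop

lemma nbG_p (k : ℕ) (i : Fin k) (j : Fin (k - 1)) :
    (Gg k).neighborSet (some (i, some j)) = {(some (i, none) : Vt k)} := by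
  ext y
  simp only [mem_neighborSet, Gg_adj, grel, Set.mem_singleton_iff]
  aesop

lemma nbH_none (k : ℕ) : (Hh k).neighborSet none = ∅ := by
  ext y
  simp only [Subgraph.mem_neighborSet, Hh_adj, hrel, Set.mem_empty_iff_false, iff_false]
  aesop

lemma nbH_v (k : ℕ) (i : Fin k) :
    (Hh k).neighborSet (some (i, none)) =
      Set.range (fun j : Fin (k - 1) => (some (i, some j) : Vt k)) := by
  ext y
  simp only [Subgraph.mem_neighborSet, Hh_adj, hrel, Set.mem_range]
  aesop

lemma nbH_p (k : ℕ) (i : Fin k) (j : Fin (k - 1)) :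
    (Hh k).neighborSet (some (i, some j)) = {(some (i, none) : Vt k)} := by
  ext y
  simp only [Subgraph.mem_neighborSet, Hh_adj, hrel, Set.mem_singleton_iff]
  aesop

/-- For every `k ≥ 2` there are a finite graph `G` with maximum degree `k`, a subgraph
`H` with maximum degree `k - 1`, and a total-(2k)-coloring of `H` in `G` that does not
extend to a total-(2k)-coloring of `G`. -/
theorem exists_nonextendable_total_coloring_two_mul (k : ℕ) (hk : 2 ≤ k) :
    ∃ (V : Type) (_ : Fintype V) (G : SimpleGraph V) (H : G.Subgraph)
      (φv : V → Fin (2 * k)) (φe : Sym2 V → Fin (2 * k)),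
      (∀ v, (G.neighborSet v).ncard ≤ k) ∧
      (∃ v, (G.neighborSet v).ncard = k) ∧
      (∀ v, (H.neighborSet v).ncard ≤ k - 1) ∧
      (∃ v, (H.neighborSet v).ncard = k - 1) ∧
      IsTotalColoringInG G H φv φe ∧
      ¬ ∃ (ψv : V → Fin (2 * k)) (ψe : Sym2 V → Fin (2 * k)),
          IsTotalColoring G ψv ψe ∧
          (∀ v ∈ H.verts, ψv v = φv v) ∧
          (∀ e ∈ H.edgeSet, ψe e = φe e) := by
  have hk1 : 1 ≤ k := by omega
  have hinjv : Function.Injective (fun i : Fin k => (some (i, none) : Vt k)) := by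
    intro a b h; simpa using h
  have hinjp : ∀ i : Fin k,
      Function.Injective (fun j : Fin (k - 1) => (some (i, some j) : Vt k)) := by
    intro i a b h; simpa using h
  refine ⟨Vt k, inferInstance, Gg k, Hh k,
    fun v => ⟨vcol k v, vcol_lt hk1 v⟩, fun e => ⟨ecolF k e, ecolF_lt hk1 e⟩,
    ?_, ?_, ?_, ?_, ?_, ?_⟩
  · -- max degree of G ≤ k
    rintro (_ | ⟨i, _ | j⟩)
    · rw [nbG_none, range_ncard _ hinjv]
    · rw [nbG_v, Set.ncard_insert_of_notMem (by simp) (Set.toFinite _),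
        range_ncard _ (hinjp i)]
      omega
    · rw [nbG_p, Set.ncard_singleton]; omega
  · exact ⟨none, by rw [nbG_none, range_ncard _ hinjv]⟩
  · -- max degree of H ≤ k - 1
    rintro (_ | ⟨i, _ | j⟩)
    · simp [nbH_none]
    · rw [nbH_v, range_ncard _ (hinjp i)]
    · rw [nbH_p, Set.ncard_singleton]; omega
  · exact ⟨some (⟨0, by omega⟩, none), by rw [nbH_v, range_ncard _ (hinjp _)]⟩
  · -- φ is a total coloring of H in G
    refine ⟨?_, ?_, ?_⟩
    · rintro u v - - (((⟨rfl, i, rfl⟩ | ⟨i, j, rfl, rfl⟩) | (⟨rfl, i, rfl⟩ | ⟨i, j, rfl, rfl⟩)) :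
        grel k u v ∨ grel k v u) <;>
      · have hi := i.isLt
        simp only [ne_eq, Fin.mk.injEq, vcol]
        omega
    · rintro u v w h1 h2 hvw
      rcases h1 with ⟨i, j, rfl, rfl⟩ | ⟨i, j, rfl, rfl⟩
      · rcases h2 with ⟨i', j', hu', rfl⟩ | ⟨i', j', hw, hu'⟩
        · obtain rfl : i' = i := by simpa using hu'.symm
          have hjj : j ≠ j' := fun h => hvw (by rw [h])
          simp only [ne_eq, Fin.mk.injEq, ecolF_mk, pcol]
          intro h
          exact hjj (Fin.val_injective (skipc_inj (i := (i' : ℕ)) (by omega)))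
        · simp at hu'
      · rcases h2 with ⟨i', j', hu', rfl⟩ | ⟨i', j', hw, hu'⟩
        · simp at hu'
        · obtain ⟨rfl, rfl⟩ : i' = i ∧ j' = j := by simpa using hu'.symm
          exact absurd hw.symm hvw
    · rintro u v ((⟨i, j, rfl, rfl⟩ | ⟨i, j, rfl, rfl⟩) : hrel k u v ∨ hrel k v u) <;>
      · have hi := i.isLt; have hj := j.isLt
        simp only [ne_eq, Fin.mk.injEq, ecolF_mk, pcol, vcol, skipc]
        split_ifs <;> omega
  · -- nonextendability
    rintro ⟨ψv, ψe, ⟨hψ1, hψ2, hψ3⟩, hagV, hagE⟩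
    set c : Vt k := none with hc
    have adj_cv : ∀ i : Fin k, (Gg k).Adj c (some (i, none)) :=
      fun i => Or.inl (Or.inl ⟨rfl, i, rfl⟩)
    have adj_vp : ∀ (i : Fin k) (j : Fin (k - 1)),
        (Gg k).Adj (some (i, none)) (some (i, some j)) :=
      fun i j => Or.inl (Or.inr ⟨i, j, rfl, rfl⟩)
    have hadjH : ∀ (i : Fin k) (j : Fin (k - 1)),
        s(some (i, none), (some (i, some j) : Vt k)) ∈ (Hh k).edgeSet :=
      fun i j => Or.inl ⟨i, j, rfl, rfl⟩
    -- values of ψ on H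
    have hψv : ∀ i : Fin k, (ψv (some (i, none)) : ℕ) = i := by
      intro i
      rw [hagV _ (Set.mem_univ _)]
      rfl
    have hψe : ∀ (i : Fin k) (j : Fin (k - 1)),
        (ψe s(some (i, none), some (i, some j)) : ℕ) = skipc i j := by
      intro i j
      rw [hagE _ (hadjH i j)]
      simp [ecolF_mk, pcol]
    -- ψv c is at least k
    have hψc_lt : (ψv c : ℕ) < 2 * k := (ψv c).isLt
    have hψc : k ≤ (ψv c : ℕ) := by
      by_contra hlt
      push_neg at hlt
      refine hψ1 (adj_cv ⟨(ψv c : ℕ), hlt⟩) (Fin.val_injective ?_)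
      rw [hψv]
    -- edge colors at c
    set E : Fin k → Fin (2 * k) := fun i => ψe s(c, some (i, none)) with hE
    have hElt : ∀ i, (E i : ℕ) < 2 * k := fun i => (E i).isLt
    have hEne_c : ∀ i, (E i : ℕ) ≠ (ψv c : ℕ) :=
      fun i => Fin.val_ne_of_ne (hψ3 (adj_cv i))
    have hEge : ∀ i, k ≤ (E i : ℕ) := by
      intro i
      by_contra hlt
      push_neg at hlt
      have hswap : s(some (i, none), c) = s(c, (some (i, none) : Vt k)) := Sym2.eq_swap
      have hne_i : (E i : ℕ) ≠ (i : ℕ) := by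
        have h := hψ3 ((Gg k).adj_symm (adj_cv i))
        rw [hswap] at h
        rw [← hψv i]
        exact Fin.val_ne_of_ne h
      have hne_j : ∀ j : Fin (k - 1), (E i : ℕ) ≠ skipc i j := by
        intro j
        have h := hψ2 ((Gg k).adj_symm (adj_cv i)) (adj_vp i j) (by simp [hc])
        rw [hswap] at h
        rw [← hψe i j]
        exact Fin.val_ne_of_ne h
      have hii := i.isLt
      set m : ℕ := (E i : ℕ) with hm
      have hne_i' : m ≠ (i : ℕ) := hne_i
      have hj' := hne_j ⟨if m < i then m else m - 1, by split_ifs <;> omega⟩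
      simp only [skipc] at hj'
      split_ifs at hj' <;> omega
    have hEinj : ∀ i i', (E i : ℕ) = (E i' : ℕ) → i = i' := by
      intro i i' h
      by_contra hne
      exact hψ2 (adj_cv i) (adj_cv i') (by simp [hne]) (Fin.val_injective h)
    -- pigeonhole
    have hg : ∀ i : Fin k,
        (if (E i : ℕ) < (ψv c : ℕ) then (E i : ℕ) - k else (E i : ℕ) - k - 1) < k - 1 := by
      intro i
      have h1 := hEge i; have h2 := hElt i; have h3 := hEne_c i
      split_ifs <;> omega
    have ginj : Function.Injective (fun i : Fin k =>
        (⟨if (E i : ℕ) < (ψv c : ℕ) then (E i : ℕ) - k else (E i : ℕ) - k - 1,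
          hg i⟩ : Fin (k - 1))) := by
      intro i i' h
      simp only [Fin.mk.injEq] at h
      apply hEinj
      have h1 := hEge i; have h2 := hElt i; have h3 := hEne_c i
      have h1' := hEge i'; have h2' := hElt i'; have h3' := hEne_c i'
      split_ifs at h <;> omega
    have := Fintype.card_le_of_injective _ ginj
    simp only [Fintype.card_fin] at this
    omega
end

section
/- For every integer t ≥ 2 there exist a finite simple graph G with maximum degree t, a subgraph H of G that is a matching (a set of vertex-disjoint copies of K_2, with their edges) in which any two vertices lying in distinct components of H are at distance at least 2 in G, and a total-(t+2)-coloring φ of H in G such that φ cannot be extended to a total-(t+2)-coloring of G. -/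
open SimpleGraph

/-- Vertex type: `none` is the hub `x`; `some (i, false)` is `aᵢ`, `some (i, true)` is `bᵢ`. -/
abbrev MyV (t : ℕ) := Option (Fin t × Bool)

/-- Adjacency: x ~ aᵢ for all i, and aᵢ ~ bᵢ. -/
def myAdj (t : ℕ) (u v : MyV t) : Prop :=
  (u = none ∧ ∃ i, v = some (i, false)) ∨ (v = none ∧ ∃ i, u = some (i, false)) ∨
    (∃ i, (u = some (i, false) ∧ v = some (i, true)) ∨
          (u = some (i, true) ∧ v = some (i, false)))

def myG (t : ℕ) : SimpleGraph (MyV t) where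
  Adj := myAdj t
  symm := by
    constructor
    rintro u v (⟨h1, h2⟩ | ⟨h1, h2⟩ | ⟨i, ⟨h1, h2⟩ | ⟨h1, h2⟩⟩)
    · exact Or.inr (Or.inl ⟨h1, h2⟩)
    · exact Or.inl ⟨h1, h2⟩
    · exact Or.inr (Or.inr ⟨i, Or.inr ⟨h2, h1⟩⟩)
    · exact Or.inr (Or.inr ⟨i, Or.inl ⟨h2, h1⟩⟩)
  loopless := by
    constructor
    rintro v (⟨h1, i, h2⟩ | ⟨h1, i, h2⟩ | ⟨i, ⟨h1, h2⟩ | ⟨h1, h2⟩⟩) <;> simp_all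

lemma myG_adj {t : ℕ} {u v : MyV t} : (myG t).Adj u v ↔ myAdj t u v := Iff.rfl

def myH (t : ℕ) : (myG t).Subgraph where
  verts := {v | v ≠ none}
  Adj u v := ∃ i : Fin t, (u = some (i, false) ∧ v = some (i, true)) ∨
      (u = some (i, true) ∧ v = some (i, false))
  adj_sub := by
    rintro u v ⟨i, h⟩
    exact Or.inr (Or.inr ⟨i, h⟩)
  edge_vert := by
    rintro u v ⟨i, ⟨rfl, rfl⟩ | ⟨rfl, rfl⟩⟩ <;> simp
  symm := by
    constructor
    rintro u v ⟨i, ⟨h1, h2⟩ | ⟨h1, h2⟩⟩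
    · exact ⟨i, Or.inr ⟨h2, h1⟩⟩
    · exact ⟨i, Or.inl ⟨h2, h1⟩⟩

lemma myH_adj {t : ℕ} {u v : MyV t} :
    (myH t).Adj u v ↔ ∃ i : Fin t, (u = some (i, false) ∧ v = some (i, true)) ∨
      (u = some (i, true) ∧ v = some (i, false)) := Iff.rfl

def myφv (t : ℕ) : MyV t → Fin (t + 2)
  | none => 0
  | some (i, false) => if i.val = 0 then 2 else 0
  | some (_, true) => 1

/-- Is this vertex `a₀`? -/
def isA0 {t : ℕ} : MyV t → Bool
  | some (i, false) => i.val = 0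
  | _ => false

def myφe (t : ℕ) : Sym2 (MyV t) → Fin (t + 2) :=
  Sym2.lift ⟨fun u v => if isA0 u || isA0 v then 0 else 2, by
    intro u v
    simp [Bool.or_comm]⟩

/-- For every `t ≥ 2` there are a finite graph `G` with maximum degree `t`, a subgraph
`H` that is a matching (every vertex of `H` has degree exactly `1` in `H`) in which any
two vertices in distinct components of `H` are at distance at least 2 in `G` (i.e. `G`
has no edge between distinct, non-matched vertices of `H`), and a total-(t+2)-coloring
of `H` in `G` that does not extend to a total-(t+2)-coloring of `G`. -/
theorem exists_nonextendable_total_coloring_of_distance_two_matching (t : ℕ) (ht : 2 ≤ t) :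
    ∃ (V : Type) (_ : Fintype V) (G : SimpleGraph V) (H : G.Subgraph)
      (φv : V → Fin (t + 2)) (φe : Sym2 V → Fin (t + 2)),
      (∀ v, (G.neighborSet v).ncard ≤ t) ∧
      (∃ v, (G.neighborSet v).ncard = t) ∧
      (∀ v ∈ H.verts, (H.neighborSet v).ncard = 1) ∧
      (∀ u ∈ H.verts, ∀ v ∈ H.verts, u ≠ v → ¬ H.Adj u v → ¬ G.Adj u v) ∧
      IsTotalColoringInG G H φv φe ∧
      ¬ ∃ (ψv : V → Fin (t + 2)) (ψe : Sym2 V → Fin (t + 2)),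
          IsTotalColoring G ψv ψe ∧
          (∀ v ∈ H.verts, ψv v = φv v) ∧
          (∀ e ∈ H.edgeSet, ψe e = φe e) := by
  -- arithmetic facts about the colors 0, 1, 2 in `Fin (t+2)`
  have hval2 : ((2 : Fin (t + 2)) : ℕ) = 2 := by
    show 2 % (t + 2) = 2
    exact Nat.mod_eq_of_lt (by omega)
  have h01 : (0 : Fin (t + 2)) ≠ 1 := by
    intro h; simpa using congrArg Fin.val h
  have h02 : (0 : Fin (t + 2)) ≠ 2 := by
    intro h; have := congrArg Fin.val h; rw [hval2] at this; simp at this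
  have h12 : (1 : Fin (t + 2)) ≠ 2 := by
    intro h; have := congrArg Fin.val h; rw [hval2] at this; simp at this
  have hnone : (myG t).neighborSet none = Set.range (fun i : Fin t => (some (i, false) : MyV t)) := by
    ext w
    constructor
    · intro h
      rw [Set.mem_range]
      rw [mem_neighborSet, myG_adj] at h
      rcases h with ⟨-, i, rfl⟩ | ⟨-, i, hi⟩ | ⟨i, ⟨hi, -⟩ | ⟨hi, -⟩⟩
      · exact ⟨i, rfl⟩
      all_goals simp_all
    · intro h
      rw [Set.mem_range] at h
      obtain ⟨i, rfl⟩ := h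
      rw [mem_neighborSet, myG_adj]
      exact Or.inl ⟨rfl, i, rfl⟩
  have hnonecard : ((myG t).neighborSet none).ncard = t := by
    rw [hnone, ← Set.image_univ, Set.ncard_image_of_injective _ (by intro a b h; simpa using h)]
    simp [Set.ncard_univ]
  refine ⟨MyV t, inferInstance, myG t, myH t, myφv t, myφe t, ?_, ⟨none, hnonecard⟩, ?_, ?_, ?_, ?_⟩
  · -- max degree ≤ t
    rintro (_ | ⟨i, _ | _⟩)
    · exact le_of_eq hnonecard
    · -- aᵢ : neighbors = {none, bᵢ}
      have : (myG t).neighborSet (some (i, false)) = {none, some (i, true)} := by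
        ext w
        simp only [mem_neighborSet, myG_adj, myAdj, Set.mem_insert_iff, Set.mem_singleton_iff]
        constructor
        · rintro (⟨h, -⟩ | ⟨rfl, -⟩ | ⟨j, ⟨h, rfl⟩ | ⟨h, -⟩⟩)
          · simp_all
          · exact Or.inl rfl
          · simp_all
          · simp_all
        · rintro (rfl | rfl)
          · exact Or.inr (Or.inl ⟨rfl, i, rfl⟩)
          · exact Or.inr (Or.inr ⟨i, Or.inl ⟨rfl, rfl⟩⟩)
      rw [this, Set.ncard_pair (by simp)]
      omega
    · -- bᵢ : neighbors = {aᵢ}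
      have : (myG t).neighborSet (some (i, true)) = {some (i, false)} := by
        ext w
        simp only [mem_neighborSet, myG_adj, myAdj, Set.mem_singleton_iff]
        constructor
        · rintro (⟨h, -⟩ | ⟨rfl, j, h⟩ | ⟨j, ⟨h, -⟩ | ⟨h, rfl⟩⟩)
          · simp_all
          · simp_all
          · simp_all
          · simp_all
        · rintro rfl
          exact Or.inr (Or.inr ⟨i, Or.inr ⟨rfl, rfl⟩⟩)
      rw [this, Set.ncard_singleton]
      omega
  · -- H is a matching
    rintro (_ | ⟨i, b⟩) hv
    · simp [myH] at hv
    · have : (myH t).neighborSet (some (i, b)) = {some (i, !b)} := by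
        ext w
        simp only [Subgraph.mem_neighborSet, myH_adj, Set.mem_singleton_iff]
        constructor
        · rintro ⟨j, ⟨h, rfl⟩ | ⟨h, rfl⟩⟩ <;>
            (injection h with h; injection h with h1 h2; subst h1; subst h2; rfl)
        · rintro rfl
          cases b
          · exact ⟨i, Or.inl ⟨rfl, rfl⟩⟩
          · exact ⟨i, Or.inr ⟨rfl, rfl⟩⟩
      rw [this, Set.ncard_singleton]
  · -- distance-2 condition
    rintro u hu v hv hne hnH hG
    rcases hG with ⟨rfl, -⟩ | ⟨rfl, -⟩ | ⟨i, h⟩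
    · exact hu rfl
    · exact hv rfl
    · exact hnH ⟨i, h⟩
  · -- φ is a total coloring of H in G
    refine ⟨?_, ?_, ?_⟩
    · rintro u v hu hv hG
      rcases hG with ⟨rfl, -⟩ | ⟨rfl, -⟩ | ⟨i, ⟨rfl, rfl⟩ | ⟨rfl, rfl⟩⟩
      · exact absurd rfl hu
      · exact absurd rfl hv
      · -- aᵢ vs bᵢ
        simp only [myφv]
        by_cases h : i.val = 0 <;> simp [h, h01, h12, Ne.symm h01, Ne.symm h12]
      · -- bᵢ vs aᵢ
        simp only [myφv]
        by_cases h : i.val = 0 <;> simp [h, h01, h12, Ne.symm h01, Ne.symm h12]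
    · rintro u v w ⟨i, hi⟩ ⟨j, hj⟩ hvw
      exfalso
      rcases hi with ⟨rfl, rfl⟩ | ⟨rfl, rfl⟩ <;> rcases hj with ⟨h, rfl⟩ | ⟨h, rfl⟩ <;> simp_all
    · rintro u v ⟨i, ⟨rfl, rfl⟩ | ⟨rfl, rfl⟩⟩
      · -- edge aᵢbᵢ versus aᵢ
        simp only [myφe, Sym2.lift_mk, isA0, myφv]
        by_cases h : i.val = 0 <;> simp [h, h01, h02, h12, Ne.symm h01, Ne.symm h02, Ne.symm h12]
      · -- edge bᵢaᵢ versus bᵢ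
        simp only [myφe, Sym2.lift_mk, isA0, myφv]
        by_cases h : i.val = 0 <;> simp [h, h01, h02, h12, Ne.symm h01, Ne.symm h02, Ne.symm h12]
  · -- non-extendability
    rintro ⟨ψv, ψe, ⟨hv, he2, he3⟩, hagV, hagE⟩
    set s := ψv none with hs
    have hadj : ∀ i : Fin t, (myG t).Adj none (some (i, false)) := fun i => Or.inl ⟨rfl, i, rfl⟩
    have hadjab : ∀ i : Fin t, (myG t).Adj (some (i, false)) (some (i, true)) :=
      fun i => Or.inr (Or.inr ⟨i, Or.inl ⟨rfl, rfl⟩⟩)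
    have hmemV : ∀ p : Fin t × Bool, (some p : MyV t) ∈ (myH t).verts := by
      intro p; simp [myH]
    have hψa : ∀ i : Fin t, ψv (some (i, false)) = if i.val = 0 then 2 else 0 := by
      intro i
      rw [hagV _ (hmemV _)]
      rfl
    have h0 : s ≠ 0 := by
      have h := hv (hadj ⟨1, by omega⟩)
      rw [hψa] at h
      simpa using h
    have h2 : s ≠ 2 := by
      have h := hv (hadj ⟨0, by omega⟩)
      rw [hψa] at h
      simpa using h
    set F : Fin t → Fin (t + 2) := fun i => ψe s(none, some (i, false)) with hF
    have hFinj : Function.Injective F := by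
      intro i j hij
      by_contra hne
      exact he2 (hadj i) (hadj j) (by simpa using hne) hij
    have hFmem : ∀ i, F i ∈ (Finset.univ \ {0, 2, s} : Finset (Fin (t + 2))) := by
      intro i
      have hne_s : F i ≠ s := he3 (hadj i)
      have hswap : (s(none, some (i, false)) : Sym2 (MyV t)) = s(some (i, false), none) :=
        Sym2.eq_swap
      have hne_v : F i ≠ ψv (some (i, false)) := by
        rw [hF]; simp only; rw [hswap]
        exact he3 ((hadj i).symm)
      rw [hψa] at hne_v
      have hEedge : (s(some (i, false), some (i, true)) : Sym2 (MyV t)) ∈ (myH t).edgeSet := by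
        rw [Subgraph.mem_edgeSet]
        exact ⟨i, Or.inl ⟨rfl, rfl⟩⟩
      have hne_e : F i ≠ ψe s(some (i, false), some (i, true)) := by
        rw [hF]; simp only; rw [hswap]
        exact he2 (hadj i).symm (hadjab i) (by simp)
      rw [hagE _ hEedge] at hne_e
      have hφe : myφe t s(some (i, false), some (i, true)) = if i.val = 0 then 0 else 2 := by
        simp only [myφe, Sym2.lift_mk, isA0]
        by_cases h : i.val = 0 <;> simp [h]
      rw [hφe] at hne_e
      simp only [Finset.mem_sdiff, Finset.mem_univ, true_and, Finset.mem_insert,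
        Finset.mem_singleton]
      by_cases h : i.val = 0 <;> simp_all
    have hcard3 : ({0, 2, s} : Finset (Fin (t + 2))).card = 3 := by
      rw [Finset.card_insert_of_notMem (by simp [h02, Ne.symm h0]),
        Finset.card_insert_of_notMem (by simp [Ne.symm h2])]
      simp
    have hle := Finset.card_le_card_of_injOn (s := (Finset.univ : Finset (Fin t))) F (fun i _ => hFmem i) hFinj.injOn
    rw [Finset.card_sdiff_of_subset (Finset.subset_univ _)] at hle
    simp [hcard3] at hle
    omega
end

section
/- There exist a finite simple graph G with maximum degree 4 and a subgraph H of G consisting of four pairwise vertex-disjoint triangles (copies of K_3, including their three edges) such that any two vertices lying in distinct triangles are at distance at least 3 in G, together with a total-7-coloring φ of H, such that φ cannot be extended to a total-7-coloring of G (note 7 = Δ(G)+3). -/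
open SimpleGraph

namespace NEx

def L : List (ℕ × ℕ) := [(0,1),(0,2),(0,3),(0,4),
  (1,5),(1,6),(1,7),(2,8),(2,9),(2,10),(3,11),(3,12),(3,13),(4,14),(4,15),(4,16),
  (5,6),(5,7),(6,7),(8,9),(8,10),(9,10),(11,12),(11,13),(12,13),(14,15),(14,16),(15,16)]

def adjB (u v : Fin 17) : Bool := decide ((u.val, v.val) ∈ L ∨ (v.val, u.val) ∈ L)

theorem adjB_symm : ∀ u v : Fin 17, adjB u v = true → adjB v u = true := by decide
theorem adjB_irrefl : ∀ u : Fin 17, ¬ adjB u u = true := by decide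

/-- The host graph: a center `0`, connectors `1,2,3,4`, and four triangles
`{5,6,7}, {8,9,10}, {11,12,13}, {14,15,16}`, connector `i+1` joined to the center
and to all vertices of triangle `i`. -/
def G : SimpleGraph (Fin 17) :=
  ⟨fun u v => adjB u v = true, ⟨fun u v h => adjB_symm u v h⟩, ⟨fun u h => adjB_irrefl u h⟩⟩

instance : DecidableRel G.Adj := fun u v => inferInstanceAs (Decidable (adjB u v = true))

def tset : Fin 4 → Finset (Fin 17)
  | 0 => {5,6,7}
  | 1 => {8,9,10}
  | 2 => {11,12,13}
  | 3 => {14,15,16}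

def Tdef : Fin 4 → Set (Fin 17) := fun i => {v | v ∈ tset i}

instance (i : Fin 4) (a : Fin 17) : Decidable (a ∈ Tdef i) :=
  inferInstanceAs (Decidable (a ∈ tset i))

instance (i : Fin 4) : Fintype (Tdef i) := by unfold Tdef; infer_instance

theorem Hsub : ∀ v w : Fin 17, (v ≠ w ∧ ∃ i, v ∈ Tdef i ∧ w ∈ Tdef i) → G.Adj v w := by decide

/-- The subgraph consisting of the four triangles. -/
def Hdef : G.Subgraph where
  verts := {v | ∃ i, v ∈ tset i}
  Adj u v := u ≠ v ∧ ∃ i, u ∈ Tdef i ∧ v ∈ Tdef i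
  adj_sub := fun {v w} h => Hsub v w h
  edge_vert := fun {v w} h => h.2.elim fun i hi => ⟨i, hi.1⟩
  symm := ⟨fun v w h => ⟨h.1.symm, h.2.imp fun i hi => ⟨hi.2, hi.1⟩⟩⟩

instance (a : Fin 17) : Decidable (a ∈ Hdef.verts) :=
  inferInstanceAs (Decidable (∃ i, a ∈ tset i))

instance : DecidableRel Hdef.Adj :=
  fun u v => inferInstanceAs (Decidable (u ≠ v ∧ ∃ i, u ∈ Tdef i ∧ v ∈ Tdef i))

/-- The vertex precoloring: triangle vertices get colors `0,1,2`. -/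
def cv (v : Fin 17) : Fin 7 := Fin.ofNat 7 ((v.val - 5) % 3 : ℕ)

def fE (u v : Fin 17) : Fin 7 :=
  if 5 ≤ u.val ∧ 5 ≤ v.val ∧ (u.val - 5) / 3 = (v.val - 5) / 3 then
    (Fin.ofNat 7 (3 - (u.val - 5) % 3 - (v.val - 5) % 3 : ℕ) : Fin 7)
  else 0

theorem fE_symm : ∀ u v, fE u v = fE v u := by decide

/-- The edge precoloring: each triangle edge gets the color of the opposite vertex. -/
def ce : Sym2 (Fin 17) → Fin 7 := Sym2.lift ⟨fE, fE_symm⟩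

theorem degle : ∀ v : Fin 17, (G.neighborSet v).ncard ≤ 4 := by
  intro v
  rw [Set.ncard_eq_toFinset_card']
  revert v; decide

theorem degx : (G.neighborSet 0).ncard = 4 := by
  rw [Set.ncard_eq_toFinset_card']; decide

theorem tcard : ∀ i, (Tdef i).ncard = 3 := by
  intro i
  rw [Set.ncard_eq_toFinset_card']
  revert i; decide

theorem disj : ∀ i j : Fin 4, i ≠ j → ∀ a : Fin 17, a ∈ Tdef i → a ∉ Tdef j := by decide

theorem dist3 : ∀ i j : Fin 4, i ≠ j → ∀ u ∈ Tdef i, ∀ v ∈ Tdef j,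
    ¬ G.Adj u v ∧ ∀ w, ¬ (G.Adj u w ∧ G.Adj w v) := by decide

theorem lem1 : ∀ u v : Fin 17, u ∈ Hdef.verts → v ∈ Hdef.verts → G.Adj u v → cv u ≠ cv v := by
  decide
theorem lem2 : ∀ u v w : Fin 17, Hdef.Adj u v → Hdef.Adj u w → v ≠ w →
    ce s(u, v) ≠ ce s(u, w) := by decide
theorem lem3 : ∀ u v : Fin 17, Hdef.Adj u v → ce s(u, v) ≠ cv u := by decide

set_option maxHeartbeats 4000000 in
set_option synthInstance.maxHeartbeats 2000000 in
set_option synthInstance.maxSize 4000 in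
theorem key : ∀ (u c0 c1 c2 e : Fin 7),
    (u ≠ 0 ∧ u ≠ 1 ∧ u ≠ 2) →
    (c0 ≠ u ∧ c0 ≠ 0 ∧ c0 ≠ 1 ∧ c0 ≠ 2) →
    (c1 ≠ u ∧ c1 ≠ 0 ∧ c1 ≠ 1 ∧ c1 ≠ 2) →
    (c2 ≠ u ∧ c2 ≠ 0 ∧ c2 ≠ 1 ∧ c2 ≠ 2) →
    (c0 ≠ c1 ∧ c0 ≠ c2 ∧ c1 ≠ c2) →
    (e ≠ u ∧ e ≠ c0 ∧ e ≠ c1 ∧ e ≠ c2) →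
    e = 0 ∨ e = 1 ∨ e = 2 := by decide

set_option maxHeartbeats 1000000 in
theorem pigeon : ∀ e1 e2 e3 e4 : Fin 7,
    (e1 = 0 ∨ e1 = 1 ∨ e1 = 2) → (e2 = 0 ∨ e2 = 1 ∨ e2 = 2) →
    (e3 = 0 ∨ e3 = 1 ∨ e3 = 2) → (e4 = 0 ∨ e4 = 1 ∨ e4 = 2) →
    (e1 ≠ e2 ∧ e1 ≠ e3 ∧ e1 ≠ e4 ∧ e2 ≠ e3 ∧ e2 ≠ e4 ∧ e3 ≠ e4) → False := by decide

/-- The central lemma: around a triangle `{a,b,c}` precolored with colors `{0,1,2}`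
(edge opposite to a vertex sharing its color), attached to a connector `y` which is
also adjacent to the center `0`, the edge `s(0,y)` is forced to have a color in
`{0,1,2}`. -/
theorem blocked (ψv : Fin 17 → Fin 7) (ψe : Sym2 (Fin 17) → Fin 7)
    (hv : ∀ ⦃u v⦄, G.Adj u v → ψv u ≠ ψv v)
    (he : ∀ ⦃u v w⦄, G.Adj u v → G.Adj u w → v ≠ w → ψe s(u, v) ≠ ψe s(u, w))
    (hev : ∀ ⦃u v⦄, G.Adj u v → ψe s(u, v) ≠ ψv u)
    (y a b c : Fin 17)
    (hy0 : G.Adj y 0) (hya : G.Adj y a) (hyb : G.Adj y b) (hyc : G.Adj y c)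
    (hab : G.Adj a b) (hac : G.Adj a c) (hbc : G.Adj b c)
    (h0a : (0 : Fin 17) ≠ a) (h0b : (0 : Fin 17) ≠ b) (h0c : (0 : Fin 17) ≠ c)
    (va : ψv a = 0) (vb : ψv b = 1) (vc : ψv c = 2)
    (eab : ψe s(a, b) = 2) (eac : ψe s(a, c) = 1) (ebc : ψe s(b, c) = 0) :
    ψe s(0, y) = 0 ∨ ψe s(0, y) = 1 ∨ ψe s(0, y) = 2 := by
  have sw : ∀ p q : Fin 17, s(p, q) = s(q, p) := fun p q => Sym2.eq_swap
  have eba : ψe s(b, a) = 2 := by rw [sw b a]; exact eab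
  have eca : ψe s(c, a) = 1 := by rw [sw c a]; exact eac
  have ecb : ψe s(c, b) = 0 := by rw [sw c b]; exact ebc
  refine key (ψv y) (ψe s(y, a)) (ψe s(y, b)) (ψe s(y, c)) (ψe s(0, y))
    ⟨fun h => hv hya (h.trans va.symm),
     fun h => hv hyb (h.trans vb.symm),
     fun h => hv hyc (h.trans vc.symm)⟩
    ⟨hev hya,
     by rw [sw y a]; exact fun h => hev hya.symm (h.trans va.symm),
     by rw [sw y a]; exact fun h => he hya.symm hac hyc.ne (h.trans eac.symm),
     by rw [sw y a]; exact fun h => he hya.symm hab hyb.ne (h.trans eab.symm)⟩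
    ⟨hev hyb,
     by rw [sw y b]; exact fun h => he hyb.symm hbc hyc.ne (h.trans ebc.symm),
     by rw [sw y b]; exact fun h => hev hyb.symm (h.trans vb.symm),
     by rw [sw y b]; exact fun h => he hyb.symm hab.symm hya.ne (h.trans eba.symm)⟩
    ⟨hev hyc,
     by rw [sw y c]; exact fun h => he hyc.symm hbc.symm hyb.ne (h.trans ecb.symm),
     by rw [sw y c]; exact fun h => he hyc.symm hac.symm hya.ne (h.trans eca.symm),
     by rw [sw y c]; exact fun h => hev hyc.symm (h.trans vc.symm)⟩
    ⟨he hya hyb hab.ne, he hya hyc hac.ne, he hyb hyc hbc.ne⟩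
    ⟨by rw [sw 0 y]; exact hev hy0,
     by rw [sw 0 y]; exact he hy0 hya h0a,
     by rw [sw 0 y]; exact he hy0 hyb h0b,
     by rw [sw 0 y]; exact he hy0 hyc h0c⟩

theorem vmem : ∀ v : Fin 17, 5 ≤ v.val → v ∈ Hdef.verts := by decide

end NEx

/-- There are a finite graph `G` with maximum degree `4` and a subgraph `H` that is a
disjoint union of four triangles `T 0, T 1, T 2, T 3` (with all their edges), any two
vertices in distinct triangles being at distance at least 3 in `G`, together with a
total-7-coloring of `H` in `G` that does not extend to a total-7-coloring of `G`. -/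
theorem exists_nonextendable_total_seven_coloring_of_distance_three_triangles :
    ∃ (V : Type) (_ : Fintype V) (G : SimpleGraph V) (H : G.Subgraph)
      (T : Fin 4 → Set V) (φv : V → Fin 7) (φe : Sym2 V → Fin 7),
      (∀ v, (G.neighborSet v).ncard ≤ 4) ∧
      (∃ v, (G.neighborSet v).ncard = 4) ∧
      (∀ i, (T i).ncard = 3) ∧
      (∀ i j, i ≠ j → Disjoint (T i) (T j)) ∧
      H.verts = ⋃ i, T i ∧
      (∀ u v, H.Adj u v ↔ u ≠ v ∧ ∃ i, u ∈ T i ∧ v ∈ T i) ∧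
      (∀ i j, i ≠ j → ∀ u ∈ T i, ∀ v ∈ T j,
        ¬ G.Adj u v ∧ ∀ w, ¬ (G.Adj u w ∧ G.Adj w v)) ∧
      IsTotalColoringInG G H φv φe ∧
      ¬ ∃ (ψv : V → Fin 7) (ψe : Sym2 V → Fin 7),
          IsTotalColoring G ψv ψe ∧
          (∀ v ∈ H.verts, ψv v = φv v) ∧
          (∀ e ∈ H.edgeSet, ψe e = φe e) := by
  refine ⟨Fin 17, inferInstance, NEx.G, NEx.Hdef, NEx.Tdef, NEx.cv, NEx.ce,
    NEx.degle, ⟨0, NEx.degx⟩, NEx.tcard,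
    fun i j hij => Set.disjoint_left.2 fun {a} ha hb => NEx.disj i j hij a ha hb,
    Set.ext fun x => by rw [Set.mem_iUnion]; exact Iff.rfl,
    fun u v => Iff.rfl,
    NEx.dist3,
    ⟨fun u v hu hv h => NEx.lem1 u v hu hv h,
     fun u v w h1 h2 h3 => NEx.lem2 u v w h1 h2 h3,
     fun u v h => NEx.lem3 u v h⟩, ?_⟩
  rintro ⟨ψv, ψe, ⟨hv, he, hev⟩, hvv, hee⟩
  -- precoloring values on the four triangles
  have hV : ∀ v : Fin 17, 5 ≤ v.val → ψv v = NEx.cv v :=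
    fun v h => hvv v (NEx.vmem v h)
  have hE : ∀ u v : Fin 17, NEx.Hdef.Adj u v → ψe s(u, v) = NEx.ce s(u, v) :=
    fun u v h => hee s(u, v) (SimpleGraph.Subgraph.mem_edgeSet.2 h)
  have E1 := NEx.blocked ψv ψe hv he hev 1 5 6 7
    (by decide) (by decide) (by decide) (by decide) (by decide) (by decide) (by decide)
    (by decide) (by decide) (by decide)
    ((hV 5 (by decide)).trans (by decide)) ((hV 6 (by decide)).trans (by decide))
    ((hV 7 (by decide)).trans (by decide))
    ((hE 5 6 (by decide)).trans (by decide)) ((hE 5 7 (by decide)).trans (by decide))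
    ((hE 6 7 (by decide)).trans (by decide))
  have E2 := NEx.blocked ψv ψe hv he hev 2 8 9 10
    (by decide) (by decide) (by decide) (by decide) (by decide) (by decide) (by decide)
    (by decide) (by decide) (by decide)
    ((hV 8 (by decide)).trans (by decide)) ((hV 9 (by decide)).trans (by decide))
    ((hV 10 (by decide)).trans (by decide))
    ((hE 8 9 (by decide)).trans (by decide)) ((hE 8 10 (by decide)).trans (by decide))
    ((hE 9 10 (by decide)).trans (by decide))
  have E3 := NEx.blocked ψv ψe hv he hev 3 11 12 13
    (by decide) (by decide) (by decide) (by decide) (by decide) (by decide) (by decide)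
    (by decide) (by decide) (by decide)
    ((hV 11 (by decide)).trans (by decide)) ((hV 12 (by decide)).trans (by decide))
    ((hV 13 (by decide)).trans (by decide))
    ((hE 11 12 (by decide)).trans (by decide)) ((hE 11 13 (by decide)).trans (by decide))
    ((hE 12 13 (by decide)).trans (by decide))
  have E4 := NEx.blocked ψv ψe hv he hev 4 14 15 16
    (by decide) (by decide) (by decide) (by decide) (by decide) (by decide) (by decide)
    (by decide) (by decide) (by decide)
    ((hV 14 (by decide)).trans (by decide)) ((hV 15 (by decide)).trans (by decide))
    ((hV 16 (by decide)).trans (by decide))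
    ((hE 14 15 (by decide)).trans (by decide)) ((hE 14 16 (by decide)).trans (by decide))
    ((hE 15 16 (by decide)).trans (by decide))
  exact NEx.pigeon (ψe s(0, 1)) (ψe s(0, 2)) (ψe s(0, 3)) (ψe s(0, 4)) E1 E2 E3 E4
    ⟨he (by decide) (by decide) (by decide), he (by decide) (by decide) (by decide),
     he (by decide) (by decide) (by decide), he (by decide) (by decide) (by decide),
     he (by decide) (by decide) (by decide), he (by decide) (by decide) (by decide)⟩
end

section
/- Let G be a finite simple bipartite graph and let L be a total list assignment on G such that |L(xy)| ≥ max{deg(x)+2, deg(y)+2} for every edge xy of G. If the vertices of G admit a proper vertex coloring in which every vertex v receives a color from L(v), then G is totally L-colorable: there is a total coloring of G in which every vertex and every edge x receives a color from L(x). -/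
open Finset
namespace TLC

variable {V : Type*} [DecidableEq V]


/-- `M` is a (bipartite, coordinate-wise) matching. -/
def IsM (M : Finset (V × V)) : Prop :=
  ∀ e ∈ M, ∀ f ∈ M, e ≠ f → e.1 ≠ f.1 ∧ e.2 ≠ f.2

/-- `ord` separates edges sharing a coordinate. -/
def Good (E : Finset (V × V)) (ord : V × V → ℕ) : Prop :=
  ∀ e ∈ E, ∀ f ∈ E, e ≠ f → (e.1 = f.1 ∨ e.2 = f.2) → ord e ≠ ord f

/-- Stable matchings / kernels in the line digraph. -/
theorem stable (ord : V × V → ℕ) (S : Finset (V × V)) (hg : Good S ord) :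
    ∃ M ⊆ S, IsM M ∧ ∀ e ∈ S, e ∉ M →
      (∃ f ∈ M, f.1 = e.1 ∧ ord f < ord e) ∨ (∃ f ∈ M, f.2 = e.2 ∧ ord e < ord f) := by
  classical
  -- auxiliary induction over "alive" sets R
  suffices H : ∀ n (R : Finset (V × V)), R.card = n → R ⊆ S →
      (∀ e ∈ S, e ∉ R →
        ∃ f ∈ R.filter (fun g => ∀ h ∈ R, h.1 = g.1 → ord g ≤ ord h),
          f.2 = e.2 ∧ ord e < ord f) →
      ∃ M ⊆ S, IsM M ∧ ∀ e ∈ S, e ∉ M →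
        (∃ f ∈ M, f.1 = e.1 ∧ ord f < ord e) ∨ (∃ f ∈ M, f.2 = e.2 ∧ ord e < ord f) by
    exact H S.card S rfl (Finset.Subset.refl S) (fun e he hne => absurd he hne)
  intro n
  induction n using Nat.strong_induction_on with
  | _ n IH =>
    intro R hcard hRS hinv
    set P : Finset (V × V) := R.filter (fun g => ∀ h ∈ R, h.1 = g.1 → ord g ≤ ord h) with hP
    by_cases hri : ∀ a ∈ P, ∀ b ∈ P, a ≠ b → a.2 ≠ b.2
    · -- P is the kernel
      refine ⟨P, fun x hx => hRS (mem_filter.mp hx).1, ?_, ?_⟩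
      · intro e he f hf hne
        refine ⟨?_, hri e he f hf hne⟩
        intro h1
        have he' := mem_filter.mp he
        have hf' := mem_filter.mp hf
        have h1' : ord e ≤ ord f := he'.2 f hf'.1 h1.symm
        have h2' : ord f ≤ ord e := hf'.2 e he'.1 h1
        exact hg e (hRS he'.1) f (hRS hf'.1) hne (Or.inl h1) (le_antisymm h1' h2')
      · intro e heS heP
        by_cases heR : e ∈ R
        · -- e in R but not minimal at its left vertex
          left
          have hnmin : ¬ ∀ h ∈ R, h.1 = e.1 → ord e ≤ ord h := by
            intro hmin; exact heP (mem_filter.mpr ⟨heR, hmin⟩)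
          push_neg at hnmin
          have hne : (R.filter (fun g => g.1 = e.1)).Nonempty :=
            ⟨e, mem_filter.mpr ⟨heR, rfl⟩⟩
          obtain ⟨g, hgmem, hgmin⟩ := Finset.exists_min_image _ ord hne
          have hg1 := mem_filter.mp hgmem
          have hgP : g ∈ P := by
            refine mem_filter.mpr ⟨hg1.1, ?_⟩
            intro h hh hh1
            exact hgmin h (mem_filter.mpr ⟨hh, hh1.trans hg1.2⟩)
          obtain ⟨h, hhR, hh1, hhlt⟩ := hnmin
          refine ⟨g, hgP, hg1.2, ?_⟩
          calc ord g ≤ ord h := hgmin h (mem_filter.mpr ⟨hhR, hh1⟩)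
            _ < ord e := hhlt
        · right
          obtain ⟨f, hf, h2, hlt⟩ := hinv e heS heR
          exact ⟨f, hf, h2, hlt⟩
    · -- shrink R
      push_neg at hri
      obtain ⟨a, ha, b, hb, hab, hab2⟩ := hri
      set w := a.2 with hw
      have hWne : ((P.filter (fun g => g.2 = w))).Nonempty := ⟨a, mem_filter.mpr ⟨ha, rfl⟩⟩
      obtain ⟨bm, hbmmem, hbmmax⟩ := Finset.exists_max_image _ ord hWne
      set Rem : Finset (V × V) := (P.filter (fun g => g.2 = w)).erase bm with hRem
      have hRemne : Rem.Nonempty := by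
        rcases eq_or_ne a bm with h | h
        · exact ⟨b, Finset.mem_erase.mpr ⟨fun hbbm => hab (h.trans hbbm.symm), mem_filter.mpr ⟨hb, hab2.symm⟩⟩⟩
        · exact ⟨a, Finset.mem_erase.mpr ⟨h, mem_filter.mpr ⟨ha, rfl⟩⟩⟩
      set R' : Finset (V × V) := R \ Rem with hR'
      have hPR : P ⊆ R := filter_subset _ _
      have hRemP : Rem ⊆ P := fun x hx => (mem_filter.mp (Finset.mem_of_mem_erase hx)).1
      have hbmP : bm ∈ P := (mem_filter.mp hbmmem).1
      have hbmw : bm.2 = w := (mem_filter.mp hbmmem).2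
      have hbmRem : bm ∉ Rem := Finset.notMem_erase _ _
      have hsub : R' ⊂ R := by
        obtain ⟨x, hx⟩ := hRemne
        refine Finset.ssubset_iff_of_subset (Finset.sdiff_subset) |>.mpr ⟨x, hPR (hRemP hx), ?_⟩
        simp only [hR', Finset.mem_sdiff, not_and, not_not]
        intro _; exact hx
      -- membership preserved from P minus Rem into P'
      have hPP' : ∀ g ∈ P, g ∉ Rem →
          g ∈ R'.filter (fun g => ∀ h ∈ R', h.1 = g.1 → ord g ≤ ord h) := by
        intro g hgP hgRem
        have hg' := mem_filter.mp hgP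
        refine mem_filter.mpr ⟨Finset.mem_sdiff.mpr ⟨hg'.1, hgRem⟩, ?_⟩
        intro h hh hh1
        exact hg'.2 h (Finset.mem_sdiff.mp hh).1 hh1
      have hbm' : bm ∈ R'.filter (fun g => ∀ h ∈ R', h.1 = g.1 → ord g ≤ ord h) :=
        hPP' bm hbmP hbmRem
      refine IH R'.card ?_ R' rfl (fun x hx => hRS (Finset.mem_sdiff.mp hx).1) ?_
      · rw [← hcard]; exact Finset.card_lt_card hsub
      · intro e heS heR'
        by_cases heR : e ∈ R
        · have heRem : e ∈ Rem := by
            by_contra hc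
            exact heR' (Finset.mem_sdiff.mpr ⟨heR, hc⟩)
          have heP := hRemP heRem
          have hew : e.2 = w := (mem_filter.mp (Finset.mem_of_mem_erase heRem)).2
          have hne : e ≠ bm := Finset.ne_of_mem_erase heRem
          have hle : ord e ≤ ord bm := hbmmax e (Finset.mem_of_mem_erase heRem)
          have hlt : ord e < ord bm := by
            refine lt_of_le_of_ne hle ?_
            exact hg e (hRS (hPR heP)) bm (hRS (hPR hbmP)) hne (Or.inr (hew.trans hbmw.symm))
          exact ⟨bm, hbm', hbmw.trans hew.symm, hlt⟩
        · obtain ⟨f, hfP, hf2, hflt⟩ := hinv e heS heR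
          by_cases hfRem : f ∈ Rem
          · have hfw : f.2 = w := (mem_filter.mp (Finset.mem_of_mem_erase hfRem)).2
            have hle : ord f ≤ ord bm := hbmmax f (Finset.mem_of_mem_erase hfRem)
            exact ⟨bm, hbm', hbmw.trans (hfw.symm.trans hf2), lt_of_lt_of_le hflt hle⟩
          · exact ⟨f, hPP' f hfP hfRem, hf2, hflt⟩

/-- counting dominators on the left / right -/
def cntL (E : Finset (V × V)) (ord : V × V → ℕ) (e : V × V) : ℕ :=
  (E.filter fun f => f.1 = e.1 ∧ ord f < ord e).card
def cntR (E : Finset (V × V)) (ord : V × V → ℕ) (e : V × V) : ℕ :=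
  (E.filter fun f => f.2 = e.2 ∧ ord e < ord f).card

theorem listcolor {α : Type*} [DecidableEq α] [Nonempty α] (ord : V × V → ℕ) :
    ∀ n (E : Finset (V × V)), E.card = n → Good E ord → ∀ L : V × V → Finset α,
    (∀ e ∈ E, cntL E ord e + cntR E ord e + 1 ≤ (L e).card) →
    ∃ col : V × V → α, (∀ e ∈ E, col e ∈ L e) ∧
      ∀ e ∈ E, ∀ f ∈ E, e ≠ f → (e.1 = f.1 ∨ e.2 = f.2) → col e ≠ col f := by
  classical
  intro n
  induction n using Nat.strong_induction_on with
  | _ n IH =>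
    intro E hn hgood L hL
    rcases E.eq_empty_or_nonempty with rfl | ⟨e₀, he₀⟩
    · exact ⟨fun _ => Classical.ofNonempty, by simp, by simp⟩
    · have hc0 : (L e₀).Nonempty := by
        have := hL e₀ he₀; rw [← Finset.card_pos]; omega
      obtain ⟨c, hc⟩ := hc0
      set S : Finset (V × V) := E.filter (fun e => c ∈ L e) with hS
      have hSsub : S ⊆ E := filter_subset _ _
      have hgS : Good S ord := fun e he f hf => hgood e (hSsub he) f (hSsub hf)
      obtain ⟨M, hMS, hMm, hMdom⟩ := stable ord S hgS
      have he₀S : e₀ ∈ S := mem_filter.mpr ⟨he₀, hc⟩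
      have hMne : M.Nonempty := by
        rcases Finset.eq_empty_or_nonempty M with rfl | h
        · rcases hMdom e₀ he₀S (Finset.notMem_empty e₀) with ⟨f, hf, _⟩ | ⟨f, hf, _⟩ <;>
            exact absurd hf (Finset.notMem_empty f)
        · exact h
      set E' : Finset (V × V) := E \ M with hE'
      have hE'sub : E' ⊆ E := Finset.sdiff_subset
      have hcard' : E'.card < n := by
        rw [← hn]
        apply Finset.card_lt_card
        refine Finset.ssubset_iff_of_subset hE'sub |>.mpr ?_
        obtain ⟨m, hm⟩ := hMne
        exact ⟨m, hSsub (hMS hm), by simp [hE', hm]⟩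
      have hgE' : Good E' ord := fun e he f hf => hgood e (hE'sub he) f (hE'sub hf)
      set L' : V × V → Finset α := fun e => (L e).erase c with hL'
      have hrec : ∀ e ∈ E', cntL E' ord e + cntR E' ord e + 1 ≤ (L' e).card := by
        intro e he
        have heE := hE'sub he
        have heM : e ∉ M := (Finset.mem_sdiff.mp he).2
        have hcl : cntL E' ord e ≤ cntL E ord e :=
          Finset.card_le_card (Finset.filter_subset_filter _ hE'sub)
        have hcr : cntR E' ord e ≤ cntR E ord e :=
          Finset.card_le_card (Finset.filter_subset_filter _ hE'sub)
        by_cases hcL : c ∈ L e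
        · have heS : e ∈ S := mem_filter.mpr ⟨heE, hcL⟩
          have hcard : (L' e).card = (L e).card - 1 := Finset.card_erase_of_mem hcL
          have hLe := hL e heE
          rcases hMdom e heS heM with ⟨f, hfM, hf1, hflt⟩ | ⟨f, hfM, hf2, hflt⟩
          · -- left dominator removed
            have hstep : cntL E' ord e < cntL E ord e := by
              apply Finset.card_lt_card
              refine ⟨Finset.filter_subset_filter _ hE'sub, ?_⟩
              intro hsub2
              have hfmem : f ∈ E.filter fun g => g.1 = e.1 ∧ ord g < ord e :=
                mem_filter.mpr ⟨hSsub (hMS hfM), hf1, hflt⟩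
              have := Finset.mem_sdiff.mp ((mem_filter.mp (hsub2 hfmem)).1)
              exact this.2 hfM
            omega
          · have hstep : cntR E' ord e < cntR E ord e := by
              apply Finset.card_lt_card
              refine ⟨Finset.filter_subset_filter _ hE'sub, ?_⟩
              intro hsub2
              have hfmem : f ∈ E.filter fun g => g.2 = e.2 ∧ ord e < ord g :=
                mem_filter.mpr ⟨hSsub (hMS hfM), hf2, hflt⟩
              have := Finset.mem_sdiff.mp ((mem_filter.mp (hsub2 hfmem)).1)
              exact this.2 hfM
            omega
        · have hcard : L' e = L e := Finset.erase_eq_of_notMem hcL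
          rw [hcard]
          have := hL e heE
          omega
      obtain ⟨col', hcol'1, hcol'2⟩ := IH E'.card hcard' E' rfl hgE' L' hrec
      refine ⟨fun e => if e ∈ M then c else col' e, ?_, ?_⟩
      · intro e he
        by_cases heM : e ∈ M
        · simp only [heM, if_true]
          exact (mem_filter.mp (hMS heM)).2
        · simp only [heM, if_false]
          have heE' : e ∈ E' := Finset.mem_sdiff.mpr ⟨he, heM⟩
          exact Finset.mem_of_mem_erase (hcol'1 e heE')
      · intro e he f hf hne hsh
        by_cases heM : e ∈ M <;> by_cases hfM : f ∈ M
        · exact absurd hsh (by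
            have := hMm e heM f hfM hne
            push_neg
            exact ⟨this.1, this.2⟩)
        · simp only [heM, hfM, if_true, if_false]
          have hfE' : f ∈ E' := Finset.mem_sdiff.mpr ⟨hf, hfM⟩
          exact (Finset.ne_of_mem_erase (hcol'1 f hfE')).symm
        · simp only [heM, hfM, if_true, if_false]
          have heE' : e ∈ E' := Finset.mem_sdiff.mpr ⟨he, heM⟩
          exact Finset.ne_of_mem_erase (hcol'1 e heE')
        · simp only [heM, hfM, if_false]
          exact hcol'2 e (Finset.mem_sdiff.mpr ⟨he, heM⟩) f (Finset.mem_sdiff.mpr ⟨hf, hfM⟩) hne hsh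


def dL (E : Finset (V × V)) (v : V) : ℕ := (E.filter fun e => e.1 = v).card
def dR (E : Finset (V × V)) (v : V) : ℕ := (E.filter fun e => e.2 = v).card

theorem hall_left (E : Finset (V × V)) (Δ : ℕ) (hpos : 0 < Δ)
    (hdR : ∀ v, dR E v ≤ Δ) :
    ∃ M ⊆ E, IsM M ∧ ∀ v, dL E v = Δ → ∃ m ∈ M, m.1 = v := by
  classical
  set UL : Finset V := (E.image Prod.fst).filter (fun v => dL E v = Δ) with hUL
  set t : {x // x ∈ UL} → Finset V :=
    fun v => (E.filter (fun e => e.1 = v.1)).image Prod.snd with ht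
  have hall : ∀ s : Finset {x // x ∈ UL}, s.card ≤ (s.biUnion t).card := by
    intro s
    set A : Finset V := s.image Subtype.val with hA
    have hAcard : A.card = s.card := Finset.card_image_of_injective _ Subtype.val_injective
    set B : Finset V := s.biUnion t with hB
    have hEB : ∀ e ∈ E.filter (fun e => e.1 ∈ A), e.2 ∈ B := by
      intro e he
      obtain ⟨heE, heA⟩ := mem_filter.mp he
      obtain ⟨v, hv, hve⟩ := Finset.mem_image.mp heA
      refine Finset.mem_biUnion.mpr ⟨v, hv, ?_⟩
      exact Finset.mem_image.mpr ⟨e, mem_filter.mpr ⟨heE, hve.symm⟩, rfl⟩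
    have h1 : A.card * Δ ≤ (E.filter (fun e => e.1 ∈ A)).card := by
      have hsum : (E.filter (fun e => e.1 ∈ A)).card
          = ∑ v ∈ A, ((E.filter (fun e => e.1 ∈ A)).filter (fun e => e.1 = v)).card :=
        Finset.card_eq_sum_card_fiberwise (fun e he => (mem_filter.mp he).2)
      have hterm : ∀ v ∈ A, ((E.filter (fun e => e.1 ∈ A)).filter (fun e => e.1 = v)).card = Δ := by
        intro v hv
        have hvUL : v ∈ UL := by
          obtain ⟨w, hw, rfl⟩ := Finset.mem_image.mp hv
          exact w.2
        have hfe : (E.filter (fun e => e.1 ∈ A)).filter (fun e => e.1 = v)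
            = E.filter (fun e => e.1 = v) := by
          ext e
          simp only [mem_filter]
          constructor
          · rintro ⟨⟨he, _⟩, h2⟩; exact ⟨he, h2⟩
          · rintro ⟨he, h2⟩; exact ⟨⟨he, h2 ▸ hv⟩, h2⟩
        rw [hfe]
        exact (mem_filter.mp hvUL).2
      rw [hsum, Finset.sum_congr rfl hterm, Finset.sum_const, smul_eq_mul]
    have h2 : (E.filter (fun e => e.1 ∈ A)).card ≤ B.card * Δ := by
      have hsum : (E.filter (fun e => e.1 ∈ A)).card
          = ∑ w ∈ B, ((E.filter (fun e => e.1 ∈ A)).filter (fun e => e.2 = w)).card :=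
        Finset.card_eq_sum_card_fiberwise hEB
      rw [hsum]
      calc ∑ w ∈ B, ((E.filter (fun e => e.1 ∈ A)).filter (fun e => e.2 = w)).card
          ≤ ∑ w ∈ B, Δ := by
            refine Finset.sum_le_sum ?_
            intro w _
            refine le_trans (le_trans (Finset.card_le_card ?_) (le_refl (dR E w))) (hdR w)
            intro e he
            have := mem_filter.mp he
            exact mem_filter.mpr ⟨(mem_filter.mp this.1).1, this.2⟩
        _ = B.card * Δ := by rw [Finset.sum_const, smul_eq_mul]
    have := le_trans h1 h2
    have hmul : s.card * Δ ≤ B.card * Δ := by rw [← hAcard] at *; exact this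
    exact Nat.le_of_mul_le_mul_right hmul hpos
  obtain ⟨f, hfinj, hft⟩ := (Finset.all_card_le_biUnion_card_iff_exists_injective t).mp hall
  refine ⟨UL.attach.image (fun v => (v.1, f v)), ?_, ?_, ?_⟩
  · intro m hm
    obtain ⟨v, _, rfl⟩ := Finset.mem_image.mp hm
    obtain ⟨e, he, he2⟩ := Finset.mem_image.mp (hft v)
    obtain ⟨heE, he1⟩ := mem_filter.mp he
    have : e = (v.1, f v) := Prod.ext he1 he2
    exact this ▸ heE
  · intro e he g hg hne
    obtain ⟨a, _, rfl⟩ := Finset.mem_image.mp he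
    obtain ⟨b, _, rfl⟩ := Finset.mem_image.mp hg
    have hab : a ≠ b := fun h => hne (by rw [h])
    constructor
    · simpa using fun h => hab (Subtype.ext h)
    · simpa using fun h => hab (hfinj h)
  · intro v hv
    have hvim : v ∈ E.image Prod.fst := by
      have : 0 < dL E v := hv ▸ hpos
      obtain ⟨e, he⟩ := Finset.card_pos.mp this
      obtain ⟨heE, he1⟩ := mem_filter.mp he
      exact Finset.mem_image.mpr ⟨e, heE, he1⟩
    have hvUL : v ∈ UL := mem_filter.mpr ⟨hvim, hv⟩
    exact ⟨(v, f ⟨v, hvUL⟩),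
      Finset.mem_image.mpr ⟨⟨v, hvUL⟩, Finset.mem_attach _ _, rfl⟩, rfl⟩

theorem hall_right (E : Finset (V × V)) (Δ : ℕ) (hpos : 0 < Δ)
    (hdL : ∀ v, dL E v ≤ Δ) :
    ∃ M ⊆ E, IsM M ∧ ∀ v, dR E v = Δ → ∃ m ∈ M, m.2 = v := by
  classical
  have hswap : ∀ (F : Finset (V × V)) v, dL (F.image Prod.swap) v = dR F v := by
    intro F v
    unfold dL dR
    rw [← Finset.card_image_of_injective (F.filter fun e => e.2 = v) Prod.swap_injective]
    congr 1
    ext e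
    simp only [Finset.mem_filter, Finset.mem_image]
    constructor
    · rintro ⟨⟨g, hg, rfl⟩, h1⟩; exact ⟨g, ⟨hg, h1⟩, rfl⟩
    · rintro ⟨g, ⟨hg, h2⟩, rfl⟩; exact ⟨⟨g, hg, rfl⟩, h2⟩
  have hswap' : ∀ (F : Finset (V × V)) v, dR (F.image Prod.swap) v = dL F v := by
    intro F v
    unfold dL dR
    rw [← Finset.card_image_of_injective (F.filter fun e => e.1 = v) Prod.swap_injective]
    congr 1
    ext e
    simp only [Finset.mem_filter, Finset.mem_image]
    constructor
    · rintro ⟨⟨g, hg, rfl⟩, h1⟩; exact ⟨g, ⟨hg, h1⟩, rfl⟩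
    · rintro ⟨g, ⟨hg, h2⟩, rfl⟩; exact ⟨⟨g, hg, rfl⟩, h2⟩
  obtain ⟨M, hME, hMm, hMcov⟩ := hall_left (E.image Prod.swap) Δ hpos
    (fun v => (hswap' E v) ▸ hdL v)
  refine ⟨M.image Prod.swap, ?_, ?_, ?_⟩
  · intro m hm
    obtain ⟨g, hg, rfl⟩ := Finset.mem_image.mp hm
    obtain ⟨g', hg', hgg⟩ := Finset.mem_image.mp (hME hg)
    rw [← hgg]
    simpa using hg'
  · intro e he g hg hne
    obtain ⟨a, ha, rfl⟩ := Finset.mem_image.mp he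
    obtain ⟨b, hb, rfl⟩ := Finset.mem_image.mp hg
    have hab : a ≠ b := fun h => hne (by rw [h])
    have := hMm a ha b hb hab
    exact ⟨this.2, this.1⟩
  · intro v hv
    obtain ⟨m, hm, hm1⟩ := hMcov v ((hswap E v) ▸ hv)
    exact ⟨m.swap, Finset.mem_image.mpr ⟨m, hm, rfl⟩, hm1⟩


/-- combine two matchings covering prescribed left / right vertex sets into one -/
theorem combine (M₁ M₂ : Finset (V × V)) (h₁ : IsM M₁) (h₂ : IsM M₂)
    (UL UR : Finset V)
    (hc₁ : ∀ v ∈ UL, ∃ m ∈ M₁, m.1 = v) (hc₂ : ∀ v ∈ UR, ∃ m ∈ M₂, m.2 = v) :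
    ∃ M ⊆ M₁ ∪ M₂, IsM M ∧ (∀ v ∈ UL, ∃ m ∈ M, m.1 = v) ∧
      (∀ v ∈ UR, ∃ m ∈ M, m.2 = v) := by
  classical
  set K : ℕ := (M₁ ∪ M₂).card + 1 with hK
  -- generic facts
  have hinterK : ∀ M N : Finset (V × V), M ⊆ M₁ ∪ M₂ → (M ∩ N).card < K := by
    intro M N hM
    calc (M ∩ N).card ≤ M.card := Finset.card_le_card (Finset.inter_subset_left)
      _ ≤ (M₁ ∪ M₂).card := Finset.card_le_card hM
      _ < K := Nat.lt_succ_self _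
  -- Phase 1 : cover UL
  have phase1 : ∃ M ⊆ M₁ ∪ M₂, IsM M ∧ (∀ v ∈ UL, ∃ m ∈ M, m.1 = v) := by
    set C : Finset (Finset (V × V)) :=
      (M₁ ∪ M₂).powerset.filter (fun M => IsM M) with hC
    have hCne : C.Nonempty := ⟨∅, mem_filter.mpr ⟨Finset.empty_mem_powerset _,
      fun e he => absurd he (Finset.notMem_empty e)⟩⟩
    set obj : Finset (V × V) → ℕ :=
      fun M => (UL.filter (fun v => ∃ m ∈ M, m.1 = v)).card * K + (M ∩ M₁).card with hobj
    obtain ⟨M, hMC, hMmax⟩ := Finset.exists_max_image C obj hCne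
    have hMsub : M ⊆ M₁ ∪ M₂ := Finset.mem_powerset.mp (mem_filter.mp hMC).1
    have hMm : IsM M := (mem_filter.mp hMC).2
    refine ⟨M, hMsub, hMm, ?_⟩
    by_contra hcon
    push_neg at hcon
    obtain ⟨v, hvUL, hvunc⟩ := hcon
    obtain ⟨e₁, he₁M₁, he₁1⟩ := hc₁ v hvUL
    have he₁M : e₁ ∉ M := fun h => hvunc e₁ h he₁1
    set T : Finset (V × V) := M.filter (fun m => m.2 = e₁.2) with hT
    have hTcard : T.card ≤ 1 := by
      refine Finset.card_le_one.mpr ?_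
      intro a ha b hb
      by_contra hne
      exact (hMm a (mem_filter.mp ha).1 b (mem_filter.mp hb).1 hne).2
        ((mem_filter.mp ha).2.trans (mem_filter.mp hb).2.symm)
    set M' : Finset (V × V) := insert e₁ (M \ T) with hM'
    have hM'sub : M' ⊆ M₁ ∪ M₂ := by
      intro x hx
      rcases Finset.mem_insert.mp hx with rfl | hx
      · exact Finset.mem_union_left _ he₁M₁
      · exact hMsub (Finset.mem_sdiff.mp hx).1
    have hM'm : IsM M' := by
      intro a ha b hb hne
      rcases Finset.mem_insert.mp ha with rfl | ha' <;>
        rcases Finset.mem_insert.mp hb with rfl | hb'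
      · exact absurd rfl hne
      · obtain ⟨hbM, hbT⟩ := Finset.mem_sdiff.mp hb'
        constructor
        · rw [he₁1]; exact fun h => hvunc b hbM h.symm
        · exact fun h => hbT (mem_filter.mpr ⟨hbM, h.symm⟩)
      · obtain ⟨haM, haT⟩ := Finset.mem_sdiff.mp ha'
        constructor
        · rw [he₁1]; exact fun h => hvunc a haM h
        · exact fun h => haT (mem_filter.mpr ⟨haM, h⟩)
      · exact hMm a (Finset.mem_sdiff.mp ha').1 b (Finset.mem_sdiff.mp hb').1 hne
    have hM'C : M' ∈ C := mem_filter.mpr ⟨Finset.mem_powerset.mpr hM'sub, hM'm⟩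
    -- coverage cardinality does not drop
    have hcovle : (UL.filter (fun w => ∃ m ∈ M, m.1 = w)).card
        ≤ (UL.filter (fun w => ∃ m ∈ M', m.1 = w)).card := by
      have hvnotin : v ∉ UL.filter (fun w => ∃ m ∈ M, m.1 = w) := by
        intro h
        obtain ⟨_, m, hm, hm1⟩ := mem_filter.mp h
        exact hvunc m hm hm1
      have hsub2 : insert v (UL.filter (fun w => ∃ m ∈ M, m.1 = w))
          ⊆ (UL.filter (fun w => ∃ m ∈ M', m.1 = w)) ∪ T.image Prod.fst := by
        intro w hw
        rcases Finset.mem_insert.mp hw with rfl | hw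
        · exact Finset.mem_union_left _
            (mem_filter.mpr ⟨hvUL, e₁, Finset.mem_insert_self _ _, he₁1⟩)
        · obtain ⟨hwUL, m, hmM, hm1⟩ := mem_filter.mp hw
          by_cases hmT : m ∈ T
          · exact Finset.mem_union_right _ (Finset.mem_image.mpr ⟨m, hmT, hm1⟩)
          · exact Finset.mem_union_left _ (mem_filter.mpr ⟨hwUL,
              m, Finset.mem_insert.mpr (Or.inr (Finset.mem_sdiff.mpr ⟨hmM, hmT⟩)), hm1⟩)
      have h1 := Finset.card_le_card hsub2
      rw [Finset.card_insert_of_notMem hvnotin] at h1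
      have h2 := Finset.card_union_le (UL.filter (fun w => ∃ m ∈ M', m.1 = w)) (T.image Prod.fst)
      have h3 := Finset.card_image_le (s := T) (f := Prod.fst)
      omega
    -- intersection with M₁ grows
    have hintgrow : (M ∩ M₁).card < (M' ∩ M₁).card := by
      have hTM₁ : ∀ m ∈ T, m ∉ M₁ := by
        intro m hmT hmM₁
        obtain ⟨hmM, hm2⟩ := mem_filter.mp hmT
        have hne : m ≠ e₁ := fun h => he₁M (h ▸ hmM)
        exact (h₁ m hmM₁ e₁ he₁M₁ hne).2 hm2
      have hsub3 : insert e₁ (M ∩ M₁) ⊆ M' ∩ M₁ := by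
        intro x hx
        rcases Finset.mem_insert.mp hx with rfl | hx
        · exact Finset.mem_inter.mpr ⟨Finset.mem_insert_self _ _, he₁M₁⟩
        · obtain ⟨hxM, hxM₁⟩ := Finset.mem_inter.mp hx
          refine Finset.mem_inter.mpr ⟨Finset.mem_insert.mpr (Or.inr
            (Finset.mem_sdiff.mpr ⟨hxM, fun hxT => hTM₁ x hxT hxM₁⟩)), hxM₁⟩
      have := Finset.card_le_card hsub3
      rw [Finset.card_insert_of_notMem (fun h => he₁M (Finset.mem_inter.mp h).1)] at this
      omega
    have hobjlt : obj M < obj M' := by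
      simp only [hobj]
      have := hinterK M M₁ hMsub
      have := hinterK M' M₁ hM'sub
      nlinarith [hcovle, hintgrow]
    exact absurd (hMmax M' hM'C) (by omega)
  -- Phase 2 : cover UR keeping UL covered
  obtain ⟨M₀, hM₀sub, hM₀m, hM₀cov⟩ := phase1
  set C : Finset (Finset (V × V)) :=
    (M₁ ∪ M₂).powerset.filter (fun M => IsM M ∧ (∀ v ∈ UL, ∃ m ∈ M, m.1 = v)) with hC
  have hCne : C.Nonempty := ⟨M₀, mem_filter.mpr ⟨Finset.mem_powerset.mpr hM₀sub, hM₀m, hM₀cov⟩⟩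
  set obj : Finset (V × V) → ℕ :=
    fun M => (UR.filter (fun v => ∃ m ∈ M, m.2 = v)).card * K + (M ∩ M₂).card with hobj
  obtain ⟨M, hMC, hMmax⟩ := Finset.exists_max_image C obj hCne
  have hMsub : M ⊆ M₁ ∪ M₂ := Finset.mem_powerset.mp (mem_filter.mp hMC).1
  have hMm : IsM M := (mem_filter.mp hMC).2.1
  have hMcovL : ∀ v ∈ UL, ∃ m ∈ M, m.1 = v := (mem_filter.mp hMC).2.2
  refine ⟨M, hMsub, hMm, hMcovL, ?_⟩
  by_contra hcon
  push_neg at hcon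
  obtain ⟨v, hvUR, hvunc⟩ := hcon
  obtain ⟨e₂, he₂M₂, he₂2⟩ := hc₂ v hvUR
  have he₂M : e₂ ∉ M := fun h => hvunc e₂ h he₂2
  set T : Finset (V × V) := M.filter (fun m => m.1 = e₂.1) with hT
  have hTcard : T.card ≤ 1 := by
    refine Finset.card_le_one.mpr ?_
    intro a ha b hb
    by_contra hne
    exact (hMm a (mem_filter.mp ha).1 b (mem_filter.mp hb).1 hne).1
      ((mem_filter.mp ha).2.trans (mem_filter.mp hb).2.symm)
  set M' : Finset (V × V) := insert e₂ (M \ T) with hM'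
  have hM'sub : M' ⊆ M₁ ∪ M₂ := by
    intro x hx
    rcases Finset.mem_insert.mp hx with rfl | hx
    · exact Finset.mem_union_right _ he₂M₂
    · exact hMsub (Finset.mem_sdiff.mp hx).1
  have hM'm : IsM M' := by
    intro a ha b hb hne
    rcases Finset.mem_insert.mp ha with rfl | ha' <;>
      rcases Finset.mem_insert.mp hb with rfl | hb'
    · exact absurd rfl hne
    · obtain ⟨hbM, hbT⟩ := Finset.mem_sdiff.mp hb'
      constructor
      · exact fun h => hbT (mem_filter.mpr ⟨hbM, h.symm⟩)
      · rw [he₂2]; exact fun h => hvunc b hbM h.symm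
    · obtain ⟨haM, haT⟩ := Finset.mem_sdiff.mp ha'
      constructor
      · exact fun h => haT (mem_filter.mpr ⟨haM, h⟩)
      · rw [he₂2]; exact fun h => hvunc a haM h
    · exact hMm a (Finset.mem_sdiff.mp ha').1 b (Finset.mem_sdiff.mp hb').1 hne
  have hM'covL : ∀ w ∈ UL, ∃ m ∈ M', m.1 = w := by
    intro w hw
    obtain ⟨m, hmM, hm1⟩ := hMcovL w hw
    by_cases hmT : m ∈ T
    · exact ⟨e₂, Finset.mem_insert_self _ _, (mem_filter.mp hmT).2 ▸ hm1⟩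
    · exact ⟨m, Finset.mem_insert.mpr (Or.inr (Finset.mem_sdiff.mpr ⟨hmM, hmT⟩)), hm1⟩
  have hM'C : M' ∈ C := mem_filter.mpr ⟨Finset.mem_powerset.mpr hM'sub, hM'm, hM'covL⟩
  have hcovle : (UR.filter (fun w => ∃ m ∈ M, m.2 = w)).card
      ≤ (UR.filter (fun w => ∃ m ∈ M', m.2 = w)).card := by
    have hvnotin : v ∉ UR.filter (fun w => ∃ m ∈ M, m.2 = w) := by
      intro h
      obtain ⟨_, m, hm, hm2⟩ := mem_filter.mp h
      exact hvunc m hm hm2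
    have hsub2 : insert v (UR.filter (fun w => ∃ m ∈ M, m.2 = w))
        ⊆ (UR.filter (fun w => ∃ m ∈ M', m.2 = w)) ∪ T.image Prod.snd := by
      intro w hw
      rcases Finset.mem_insert.mp hw with rfl | hw
      · exact Finset.mem_union_left _
          (mem_filter.mpr ⟨hvUR, e₂, Finset.mem_insert_self _ _, he₂2⟩)
      · obtain ⟨hwUR, m, hmM, hm2⟩ := mem_filter.mp hw
        by_cases hmT : m ∈ T
        · exact Finset.mem_union_right _ (Finset.mem_image.mpr ⟨m, hmT, hm2⟩)
        · exact Finset.mem_union_left _ (mem_filter.mpr ⟨hwUR,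
            m, Finset.mem_insert.mpr (Or.inr (Finset.mem_sdiff.mpr ⟨hmM, hmT⟩)), hm2⟩)
    have h1 := Finset.card_le_card hsub2
    rw [Finset.card_insert_of_notMem hvnotin] at h1
    have h2 := Finset.card_union_le (UR.filter (fun w => ∃ m ∈ M', m.2 = w)) (T.image Prod.snd)
    have h3 := Finset.card_image_le (s := T) (f := Prod.snd)
    omega
  have hintgrow : (M ∩ M₂).card < (M' ∩ M₂).card := by
    have hTM₂ : ∀ m ∈ T, m ∉ M₂ := by
      intro m hmT hmM₂
      obtain ⟨hmM, hm1⟩ := mem_filter.mp hmT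
      have hne : m ≠ e₂ := fun h => he₂M (h ▸ hmM)
      exact (h₂ m hmM₂ e₂ he₂M₂ hne).1 hm1
    have hsub3 : insert e₂ (M ∩ M₂) ⊆ M' ∩ M₂ := by
      intro x hx
      rcases Finset.mem_insert.mp hx with rfl | hx
      · exact Finset.mem_inter.mpr ⟨Finset.mem_insert_self _ _, he₂M₂⟩
      · obtain ⟨hxM, hxM₂⟩ := Finset.mem_inter.mp hx
        refine Finset.mem_inter.mpr ⟨Finset.mem_insert.mpr (Or.inr
          (Finset.mem_sdiff.mpr ⟨hxM, fun hxT => hTM₂ x hxT hxM₂⟩)), hxM₂⟩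
    have := Finset.card_le_card hsub3
    rw [Finset.card_insert_of_notMem (fun h => he₂M (Finset.mem_inter.mp h).1)] at this
    omega
  have hobjlt : obj M < obj M' := by
    simp only [hobj]
    have := hinterK M M₂ hMsub
    have := hinterK M' M₂ hM'sub
    nlinarith [hcovle, hintgrow]
  exact absurd (hMmax M' hM'C) (by omega)


theorem nobadchain (E M : Finset (V × V)) (hME : M ⊆ E) (hMm : IsM M)
    (UL UR : V → Prop) [DecidablePred UL] [DecidablePred UR]
    (hmeet : ∀ e ∈ M, UL e.1 ∨ UR e.2)
    (hcovL : ∀ v, UL v → ∃ m ∈ M, m.1 = v)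
    (hcovR : ∀ v, UR v → ∃ m ∈ M, m.2 = v)
    (hmax : ∀ M' ⊆ E, IsM M' → (∀ e ∈ M', UL e.1 ∨ UR e.2) →
        (∀ v, UL v → ∃ m ∈ M', m.1 = v) → (∀ v, UR v → ∃ m ∈ M', m.2 = v) →
        (M'.filter (fun e => UL e.1 ∧ UR e.2)).card
          ≤ (M.filter (fun e => UL e.1 ∧ UR e.2)).card) :
    ∀ k, ∀ u : ℕ → V × V,
      (∀ i < k, u (i+1) ∈ M ∧ ∃ f ∈ E, f ∉ M ∧ f.1 = (u i).1 ∧ f.2 = (u (i+1)).2) →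
      u 0 ∈ M → UL (u 0).1 → ¬ UR (u 0).2 → UL (u k).1 := by
  classical
  intro k
  induction k using Nat.strong_induction_on with
  | _ k IH =>
    intro u hchain hu0 hUL0 hUR0
    by_contra hULk
    have hk1 : 1 ≤ k := by
      rcases Nat.eq_zero_or_pos k with rfl | h
      · exact absurd hUL0 hULk
      · exact h
    have humem : ∀ i ≤ k, u i ∈ M := by
      intro i
      induction i with
      | zero => exact fun _ => hu0
      | succ n ih => exact fun h => (hchain n (by omega)).1
    have hULi : ∀ j < k, UL (u j).1 := by
      intro j hj
      exact IH j hj u (fun i hi => hchain i (by omega)) hu0 hUL0 hUR0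
    have hURi : ∀ j, 0 < j → j < k → UR (u j).2 := by
      intro j hj0 hjk
      by_contra hURj
      have hres := IH (k - j) (by omega) (fun i => u (j + i))
        (fun i hi => hchain (j + i) (by omega)) (humem j (le_of_lt hjk))
        (hULi j hjk) hURj
      have hres' : UL (u (j + (k - j))).1 := hres
      have hjj : j + (k - j) = k := by omega
      rw [hjj] at hres'
      exact hULk hres'
    have hURk : UR (u k).2 := by
      rcases hmeet (u k) (humem k le_rfl) with h | h
      · exact absurd h hULk
      · exact h
    have hinj : ∀ i j, i < j → j ≤ k → u i ≠ u j := by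
      intro i j hij hjk heq
      rcases eq_or_lt_of_le hjk with rfl | hjk'
      · exact hULk (heq ▸ hULi i hij)
      · rcases Nat.eq_zero_or_pos i with rfl | hi0
        · exact hUR0 (heq ▸ hURi j (by omega) hjk')
        · -- splice out the loop between i and j
          set d := j - i with hd
          have hd1 : 1 ≤ d := by omega
          set v : ℕ → V × V := fun t => if t ≤ i then u t else u (t + d) with hv
          have hres := IH (k - d) (by omega) v ?_ ?_ ?_ ?_
          · have hvk : v (k - d) = u k := by
              have hgt : ¬ (k - d ≤ i) := by omega
              have harith : k - d + d = k := by omega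
              simp only [hv, if_neg hgt, harith]
            exact hULk (hvk ▸ hres)
          · intro t ht
            by_cases htl : t + 1 ≤ i
            · have h1 : v t = u t := by simp [hv, (by omega : t ≤ i)]
              have h2 : v (t + 1) = u (t + 1) := by simp [hv, htl]
              rw [h1, h2]
              exact hchain t (by omega)
            · by_cases hte : t ≤ i
              · -- t = i
                have hti : t = i := by omega
                have h1 : v t = u t := by simp [hv, hte]
                have h2 : v (t + 1) = u (j + 1) := by
                  have : ¬ (t + 1 ≤ i) := htl
                  have harith : t + 1 + d = j + 1 := by omega
                  simp only [hv, if_neg this, harith]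
                rw [h1, h2, hti, heq]
                exact hchain j (by omega)
              · have h1 : v t = u (t + d) := by simp [hv, hte]
                have h2 : v (t + 1) = u (t + d + 1) := by
                  have hn : ¬ (t + 1 ≤ i) := by omega
                  have harith : t + 1 + d = t + d + 1 := by omega
                  simp only [hv, if_neg hn, harith]
                rw [h1, h2]
                exact hchain (t + d) (by omega)
          · simpa [hv] using hu0
          · simpa [hv] using hUL0
          · simpa [hv] using hUR0
    -- injectivity of coordinates
    have hinj' : ∀ i j, i ≤ k → j ≤ k → i ≠ j → u i ≠ u j := by
      intro i j hi hj hne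
      rcases lt_or_gt_of_ne hne with h | h
      · exact hinj i j h hj
      · exact fun he => hinj j i h hi he.symm
    have hinj1 : ∀ i j, i ≤ k → j ≤ k → i ≠ j → (u i).1 ≠ (u j).1 := by
      intro i j hi hj hne
      exact (hMm (u i) (humem i hi) (u j) (humem j hj) (hinj' i j hi hj hne)).1
    have hinj2 : ∀ i j, i ≤ k → j ≤ k → i ≠ j → (u i).2 ≠ (u j).2 := by
      intro i j hi hj hne
      exact (hMm (u i) (humem i hi) (u j) (humem j hj) (hinj' i j hi hj hne)).2
    -- surgery
    set g : ℕ → V × V := fun i => ((u i).1, (u (i + 1)).2) with hg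
    have hgEM : ∀ i < k, g i ∈ E ∧ g i ∉ M := by
      intro i hi
      obtain ⟨_, f, hfE, hfM, hf1, hf2⟩ := hchain i hi
      have hfe : f = g i := Prod.ext hf1 hf2
      exact ⟨hfe ▸ hfE, hfe ▸ hfM⟩
    set D : Finset (V × V) := (Finset.range (k + 1)).image u with hD
    set N : Finset (V × V) := (Finset.range k).image g with hN
    have hDM : D ⊆ M := by
      intro x hx
      obtain ⟨i, hi, rfl⟩ := Finset.mem_image.mp hx
      exact humem i (by simpa using Nat.lt_succ_iff.mp (Finset.mem_range.mp hi))
    have hNM : ∀ x ∈ N, x ∉ M := by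
      intro x hx
      obtain ⟨i, hi, rfl⟩ := Finset.mem_image.mp hx
      exact (hgEM i (Finset.mem_range.mp hi)).2
    set M' : Finset (V × V) := (M \ D) ∪ N with hM'
    have hM'E : M' ⊆ E := by
      intro x hx
      rcases Finset.mem_union.mp hx with hx | hx
      · exact hME (Finset.mem_sdiff.mp hx).1
      · obtain ⟨i, hi, rfl⟩ := Finset.mem_image.mp hx
        exact (hgEM i (Finset.mem_range.mp hi)).1
    have hM'm : IsM M' := by
      have haux : ∀ a ∈ M \ D, ∀ i < k, a.1 ≠ (g i).1 ∧ a.2 ≠ (g i).2 := by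
        intro a ha i hik
        obtain ⟨haM, haD⟩ := Finset.mem_sdiff.mp ha
        constructor
        · intro h1
          have hne : a ≠ u i := by
            intro h
            exact haD (Finset.mem_image.mpr ⟨i, Finset.mem_range.mpr (by omega), h.symm⟩)
          exact (hMm a haM (u i) (humem i (by omega)) hne).1 h1
        · intro h2
          have hne : a ≠ u (i + 1) := by
            intro h
            exact haD (Finset.mem_image.mpr ⟨i + 1, Finset.mem_range.mpr (by omega), h.symm⟩)
          exact (hMm a haM (u (i + 1)) (humem (i + 1) (by omega)) hne).2 h2
      intro a ha b hb hne
      rcases Finset.mem_union.mp ha with ha' | ha' <;>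
        rcases Finset.mem_union.mp hb with hb' | hb'
      · exact hMm a (Finset.mem_sdiff.mp ha').1 b (Finset.mem_sdiff.mp hb').1 hne
      · obtain ⟨j, hj, rfl⟩ := Finset.mem_image.mp hb'
        exact haux a ha' j (Finset.mem_range.mp hj)
      · obtain ⟨i, hi, rfl⟩ := Finset.mem_image.mp ha'
        have := haux b hb' i (Finset.mem_range.mp hi)
        exact ⟨(this.1 ∘ Eq.symm), (this.2 ∘ Eq.symm)⟩
      · obtain ⟨i, hi, rfl⟩ := Finset.mem_image.mp ha'
        obtain ⟨j, hj, rfl⟩ := Finset.mem_image.mp hb'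
        have hik := Finset.mem_range.mp hi
        have hjk := Finset.mem_range.mp hj
        have hij : i ≠ j := fun h => hne (by rw [h])
        exact ⟨hinj1 i j (by omega) (by omega) hij,
          hinj2 (i + 1) (j + 1) (by omega) (by omega) (by omega)⟩
    have hmeet' : ∀ e ∈ M', UL e.1 ∨ UR e.2 := by
      intro e he
      rcases Finset.mem_union.mp he with he' | he'
      · exact hmeet e (Finset.mem_sdiff.mp he').1
      · obtain ⟨i, hi, rfl⟩ := Finset.mem_image.mp he'
        exact Or.inl (hULi i (Finset.mem_range.mp hi))
    have hcovL' : ∀ v, UL v → ∃ m ∈ M', m.1 = v := by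
      intro v hv
      obtain ⟨m, hmM, hm1⟩ := hcovL v hv
      by_cases hmD : m ∈ D
      · obtain ⟨i, hi, rfl⟩ := Finset.mem_image.mp hmD
        have hik : i ≤ k := Nat.lt_succ_iff.mp (Finset.mem_range.mp hi)
        have hiklt : i < k := by
          rcases eq_or_lt_of_le hik with rfl | h
          · exact absurd (hm1 ▸ hv) hULk
          · exact h
        exact ⟨g i, Finset.mem_union_right _
          (Finset.mem_image.mpr ⟨i, Finset.mem_range.mpr hiklt, rfl⟩), hm1⟩
      · exact ⟨m, Finset.mem_union_left _ (Finset.mem_sdiff.mpr ⟨hmM, hmD⟩), hm1⟩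
    have hcovR' : ∀ v, UR v → ∃ m ∈ M', m.2 = v := by
      intro v hv
      obtain ⟨m, hmM, hm2⟩ := hcovR v hv
      by_cases hmD : m ∈ D
      · obtain ⟨i, hi, rfl⟩ := Finset.mem_image.mp hmD
        have hik : i ≤ k := Nat.lt_succ_iff.mp (Finset.mem_range.mp hi)
        have hi0 : 0 < i := by
          rcases Nat.eq_zero_or_pos i with rfl | h
          · exact absurd (hm2 ▸ hv) hUR0
          · exact h
        refine ⟨g (i - 1), Finset.mem_union_right _
          (Finset.mem_image.mpr ⟨i - 1, Finset.mem_range.mpr (by omega), rfl⟩), ?_⟩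
        have : i - 1 + 1 = i := by omega
        simp only [hg, this, hm2]
      · exact ⟨m, Finset.mem_union_left _ (Finset.mem_sdiff.mpr ⟨hmM, hmD⟩), hm2⟩
    -- cardinality counting
    have hNcard : N.card = k := by
      rw [hN, Finset.card_image_of_injOn, Finset.card_range]
      intro i hi j hj hij
      simp only [Finset.mem_coe, Finset.mem_range] at hi hj
      by_contra hne
      have h1 : (g i).1 = (g j).1 := congrArg Prod.fst hij
      exact hinj1 i j (by omega) (by omega) hne h1

    have hNfilter : N.filter (fun e => UL e.1 ∧ UR e.2) = N := by
      refine Finset.filter_true_of_mem ?_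
      intro x hx
      obtain ⟨i, hi, rfl⟩ := Finset.mem_image.mp hx
      have hik := Finset.mem_range.mp hi
      refine ⟨hULi i hik, ?_⟩
      rcases eq_or_lt_of_le (Nat.succ_le_of_lt hik) with h | h
      · show UR (u (i + 1)).2
        have h' : i + 1 = k := h
        rw [h']
        exact hURk
      · exact hURi (i + 1) (by omega) h
    have hDfilter : D.filter (fun e => UL e.1 ∧ UR e.2) = (Finset.Ioo 0 k).image u := by
      apply Finset.Subset.antisymm
      · intro x hx
        obtain ⟨hxD, hUL, hUR⟩ := Finset.mem_filter.mp hx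
        obtain ⟨i, hi, rfl⟩ := Finset.mem_image.mp hxD
        have hik : i ≤ k := Nat.lt_succ_iff.mp (Finset.mem_range.mp hi)
        have h1 : i ≠ k := fun h => hULk (h ▸ hUL)
        have h2 : i ≠ 0 := fun h => hUR0 (h ▸ hUR)
        exact Finset.mem_image.mpr ⟨i, Finset.mem_Ioo.mpr ⟨by omega, by omega⟩, rfl⟩
      · intro x hx
        obtain ⟨i, hi, rfl⟩ := Finset.mem_image.mp hx
        obtain ⟨hi0, hik⟩ := Finset.mem_Ioo.mp hi
        exact Finset.mem_filter.mpr ⟨Finset.mem_image.mpr ⟨i, Finset.mem_range.mpr (by omega), rfl⟩,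
          hULi i hik, hURi i hi0 hik⟩
    have hDfcard : (D.filter (fun e => UL e.1 ∧ UR e.2)).card = k - 1 := by
      have hinjOn : Set.InjOn u (Finset.Ioo 0 k) := by
        intro i hi j hj hij
        simp only [Finset.mem_coe, Finset.mem_Ioo] at hi hj
        by_contra hne
        exact hinj' i j (by omega) (by omega) hne hij
      rw [hDfilter, Finset.card_image_of_injOn hinjOn, Nat.card_Ioo]
      omega
    have hdisj1 : Disjoint (M \ D) N := by
      rw [Finset.disjoint_left]
      intro x hx hxN
      exact hNM x hxN (Finset.mem_sdiff.mp hx).1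
    have hdisj2 : Disjoint (M \ D) D := Finset.sdiff_disjoint
    have hMdecomp : M = (M \ D) ∪ D := (Finset.sdiff_union_of_subset hDM).symm
    have hcount : (M'.filter (fun e => UL e.1 ∧ UR e.2)).card
        = ((M \ D).filter (fun e => UL e.1 ∧ UR e.2)).card + k := by
      rw [hM', Finset.filter_union, Finset.card_union_of_disjoint
        (Finset.disjoint_filter_filter hdisj1), hNfilter, hNcard]
    have hcount2 : (M.filter (fun e => UL e.1 ∧ UR e.2)).card
        = ((M \ D).filter (fun e => UL e.1 ∧ UR e.2)).card + (k - 1) := by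
      conv_lhs => rw [hMdecomp]
      rw [Finset.filter_union, Finset.card_union_of_disjoint
        (Finset.disjoint_filter_filter hdisj2), hDfcard]
    have := hmax M' hM'E hM'm hmeet' hcovL' hcovR'
    omega
theorem rtg_chain {X : Type*} (r : X → X → Prop) (a b : X) (h : Relation.ReflTransGen r a b) :
    ∃ k, ∃ u : ℕ → X, u 0 = a ∧ u k = b ∧ ∀ i < k, r (u i) (u (i + 1)) := by
  induction h with
  | refl => exact ⟨0, fun _ => a, rfl, rfl, by omega⟩
  | @tail b' c hab hbc ih =>
    obtain ⟨k, u, h0, hk, hch⟩ := ih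
    refine ⟨k + 1, fun t => if t = k + 1 then c else u t, by simpa using h0, by simp, ?_⟩
    intro i hi
    by_cases hik : i = k
    · subst hik
      simp only [if_pos rfl, if_neg (by omega : ¬ i = i + 1)]
      exact hk ▸ hbc
    · have h1 : ¬ (i = k + 1) := by omega
      have h2 : ¬ (i + 1 = k + 1) := by omega
      simp only [if_neg h1, if_neg h2]
      exact hch i (by omega)

theorem exists_ord : ∀ n (E : Finset (V × V)), E.card = n →
    ∃ ord : V × V → ℕ, Good E ord ∧
      ∀ e ∈ E, cntL E ord e + cntR E ord e + 1 ≤ max (dL E e.1) (dR E e.2) := by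
  classical
  intro n
  induction n using Nat.strong_induction_on with
  | _ n IH =>
    intro E hn
    rcases E.eq_empty_or_nonempty with rfl | hEne
    · exact ⟨fun _ => 0, fun e he => absurd he (Finset.notMem_empty e),
        fun e he => absurd he (Finset.notMem_empty e)⟩
    set Δ : ℕ := E.sup (fun e => max (dL E e.1) (dR E e.2)) with hΔ
    have hbud : ∀ e ∈ E, max (dL E e.1) (dR E e.2) ≤ Δ :=
      fun e he => Finset.le_sup (f := fun e => max (dL E e.1) (dR E e.2)) he
    have hdLpos : ∀ e ∈ E, 0 < dL E e.1 :=
      fun e he => Finset.card_pos.mpr ⟨e, mem_filter.mpr ⟨he, rfl⟩⟩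
    have hdRpos : ∀ e ∈ E, 0 < dR E e.2 :=
      fun e he => Finset.card_pos.mpr ⟨e, mem_filter.mpr ⟨he, rfl⟩⟩
    have hdLle : ∀ v, dL E v ≤ Δ := by
      intro v
      rcases Nat.eq_zero_or_pos (dL E v) with h | h
      · omega
      · obtain ⟨e, he⟩ := Finset.card_pos.mp h
        obtain ⟨heE, he1⟩ := mem_filter.mp he
        calc dL E v = dL E e.1 := by rw [he1]
          _ ≤ _ := le_trans (le_max_left _ _) (hbud e heE)
    have hdRle : ∀ v, dR E v ≤ Δ := by
      intro v
      rcases Nat.eq_zero_or_pos (dR E v) with h | h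
      · omega
      · obtain ⟨e, he⟩ := Finset.card_pos.mp h
        obtain ⟨heE, he2⟩ := mem_filter.mp he
        calc dR E v = dR E e.2 := by rw [he2]
          _ ≤ _ := le_trans (le_max_right _ _) (hbud e heE)
    have hΔpos : 0 < Δ := by
      obtain ⟨e₀, he₀⟩ := hEne
      calc 0 < dL E e₀.1 := hdLpos e₀ he₀
        _ ≤ Δ := hdLle _
    -- initial candidate via Hall
    set ULf : Finset V := (E.image Prod.fst).filter (fun v => dL E v = Δ) with hULf
    set URf : Finset V := (E.image Prod.snd).filter (fun v => dR E v = Δ) with hURf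
    have hULmem : ∀ v, dL E v = Δ ↔ v ∈ ULf := by
      intro v
      constructor
      · intro h
        obtain ⟨e, he⟩ := Finset.card_pos.mp (h ▸ hΔpos)
        obtain ⟨heE, he1⟩ := mem_filter.mp he
        exact mem_filter.mpr ⟨Finset.mem_image.mpr ⟨e, heE, he1⟩, h⟩
      · exact fun h => (mem_filter.mp h).2
    have hURmem : ∀ v, dR E v = Δ ↔ v ∈ URf := by
      intro v
      constructor
      · intro h
        obtain ⟨e, he⟩ := Finset.card_pos.mp (h ▸ hΔpos)
        obtain ⟨heE, he2⟩ := mem_filter.mp he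
        exact mem_filter.mpr ⟨Finset.mem_image.mpr ⟨e, heE, he2⟩, h⟩
      · exact fun h => (mem_filter.mp h).2
    obtain ⟨M₁, hM₁E, hM₁m, hM₁cov⟩ := hall_left E Δ hΔpos hdRle
    obtain ⟨M₂, hM₂E, hM₂m, hM₂cov⟩ := hall_right E Δ hΔpos hdLle
    obtain ⟨Mc, hMcsub, hMcm, hMccovL, hMccovR⟩ := combine M₁ M₂ hM₁m hM₂m ULf URf
      (fun v hv => hM₁cov v ((hULmem v).mpr hv)) (fun v hv => hM₂cov v ((hURmem v).mpr hv))
    have hMcE : Mc ⊆ E := fun x hx => by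
      rcases Finset.mem_union.mp (hMcsub hx) with h | h
      · exact hM₁E h
      · exact hM₂E h
    set Mc' : Finset (V × V) := Mc.filter (fun e => dL E e.1 = Δ ∨ dR E e.2 = Δ) with hMc'
    -- the candidate set
    set C : Finset (Finset (V × V)) := E.powerset.filter (fun M => IsM M ∧
      (∀ e ∈ M, dL E e.1 = Δ ∨ dR E e.2 = Δ) ∧
      (∀ v ∈ ULf, ∃ m ∈ M, m.1 = v) ∧ (∀ v ∈ URf, ∃ m ∈ M, m.2 = v)) with hC
    have hMc'C : Mc' ∈ C := by
      refine mem_filter.mpr ⟨Finset.mem_powerset.mpr (fun x hx => hMcE (mem_filter.mp hx).1),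
        ?_, ?_, ?_, ?_⟩
      · exact fun e he f hf hne => hMcm e (mem_filter.mp he).1 f (mem_filter.mp hf).1 hne
      · exact fun e he => (mem_filter.mp he).2
      · intro v hv
        obtain ⟨m, hm, hm1⟩ := hMccovL v hv
        exact ⟨m, mem_filter.mpr ⟨hm, Or.inl (hm1 ▸ (mem_filter.mp hv).2)⟩, hm1⟩
      · intro v hv
        obtain ⟨m, hm, hm2⟩ := hMccovR v hv
        exact ⟨m, mem_filter.mpr ⟨hm, Or.inr (hm2 ▸ (mem_filter.mp hv).2)⟩, hm2⟩
    obtain ⟨M, hMC, hMmax⟩ := Finset.exists_max_image C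
      (fun M => (M.filter (fun e => dL E e.1 = Δ ∧ dR E e.2 = Δ)).card) ⟨Mc', hMc'C⟩
    have hME : M ⊆ E := Finset.mem_powerset.mp (mem_filter.mp hMC).1
    have hMm : IsM M := (mem_filter.mp hMC).2.1
    have hMmeet : ∀ e ∈ M, dL E e.1 = Δ ∨ dR E e.2 = Δ := (mem_filter.mp hMC).2.2.1
    have hMcovL : ∀ v, dL E v = Δ → ∃ m ∈ M, m.1 = v :=
      fun v hv => (mem_filter.mp hMC).2.2.2.1 v ((hULmem v).mp hv)
    have hMcovR : ∀ v, dR E v = Δ → ∃ m ∈ M, m.2 = v :=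
      fun v hv => (mem_filter.mp hMC).2.2.2.2 v ((hURmem v).mp hv)
    have hmax' : ∀ M' ⊆ E, IsM M' → (∀ e ∈ M', dL E e.1 = Δ ∨ dR E e.2 = Δ) →
        (∀ v, dL E v = Δ → ∃ m ∈ M', m.1 = v) → (∀ v, dR E v = Δ → ∃ m ∈ M', m.2 = v) →
        (M'.filter (fun e => dL E e.1 = Δ ∧ dR E e.2 = Δ)).card
          ≤ (M.filter (fun e => dL E e.1 = Δ ∧ dR E e.2 = Δ)).card := by
      intro M' hM'E hM'm hM'meet hM'covL hM'covR
      refine hMmax M' (mem_filter.mpr ⟨Finset.mem_powerset.mpr hM'E, hM'm, hM'meet, ?_, ?_⟩)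
      · exact fun v hv => hM'covL v (mem_filter.mp hv).2
      · exact fun v hv => hM'covR v (mem_filter.mp hv).2
    -- step relation and the "pre" part P of M
    set step : V × V → V × V → Prop :=
      fun a b => b ∈ M ∧ ∃ f ∈ E, f ∉ M ∧ f.1 = a.1 ∧ f.2 = b.2 with hstep
    set P : Finset (V × V) := M.filter (fun e => ∃ a, (a ∈ M ∧ dL E a.1 = Δ ∧ ¬ dR E a.2 = Δ) ∧
      Relation.ReflTransGen step a e) with hP
    have hPM : P ⊆ M := filter_subset _ _
    have keyUL : ∀ e ∈ P, dL E e.1 = Δ := by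
      intro e he
      obtain ⟨heM, a, ⟨haM, haUL, haUR⟩, hrt⟩ := mem_filter.mp he
      obtain ⟨k, u, h0, hk, hch⟩ := rtg_chain step a e hrt
      have := nobadchain E M hME hMm (fun v => dL E v = Δ) (fun v => dR E v = Δ)
        hMmeet hMcovL hMcovR hmax' k u
        (fun i hi => hch i hi) (h0 ▸ haM) (by rw [h0]; exact haUL) (by rw [h0]; exact haUR)
      exact hk ▸ this
    have keyclosure : ∀ e ∈ P, ∀ e', step e e' → e' ∈ P := by
      intro e he e' hst
      obtain ⟨heM, a, ha, hrt⟩ := mem_filter.mp he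
      exact mem_filter.mpr ⟨hst.1, a, ha, hrt.tail hst⟩
    have keyUR : ∀ e ∈ M, e ∉ P → dR E e.2 = Δ := by
      intro e heM heP
      by_contra hUR
      have hUL : dL E e.1 = Δ := by
        rcases hMmeet e heM with h | h
        · exact h
        · exact absurd h hUR
      exact heP (mem_filter.mpr ⟨heM, e, ⟨heM, hUL, hUR⟩, Relation.ReflTransGen.refl⟩)
    -- M is nonempty, recurse on E \ M
    have hMne : M.Nonempty := by
      obtain ⟨e₀, he₀, hsup⟩ := Finset.exists_mem_eq_sup E hEne
        (fun e => max (dL E e.1) (dR E e.2))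
      rcases max_cases (dL E e₀.1) (dR E e₀.2) with ⟨hmx, _⟩ | ⟨hmx, _⟩
      · obtain ⟨m, hm, _⟩ := hMcovL e₀.1 (by rw [← hmx, ← hsup])
        exact ⟨m, hm⟩
      · obtain ⟨m, hm, _⟩ := hMcovR e₀.2 (by rw [← hmx, ← hsup])
        exact ⟨m, hm⟩
    set E' : Finset (V × V) := E \ M with hE'
    have hE'sub : E' ⊆ E := Finset.sdiff_subset
    have hcard' : E'.card < n := by
      rw [← hn]
      apply Finset.card_lt_card
      refine Finset.ssubset_iff_of_subset hE'sub |>.mpr ?_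
      obtain ⟨m, hm⟩ := hMne
      exact ⟨m, hME hm, by simp [hE', hm]⟩
    obtain ⟨ord', hgood', hbound'⟩ := IH E'.card hcard' E' rfl
    set B : ℕ := E'.sup ord' + 2 with hB
    have hordlt : ∀ f ∈ E', ord' f + 1 < B := by
      intro f hf
      have := Finset.le_sup (f := ord') hf
      omega
    set ord : V × V → ℕ := fun e => if e ∈ P then 0 else if e ∈ M then B else ord' e + 1
      with hord
    have hordP : ∀ e ∈ P, ord e = 0 := fun e he => by simp [hord, he]
    have hordM : ∀ e ∈ M, e ∉ P → ord e = B := fun e he hp => by simp [hord, he, hp]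
    have hordE' : ∀ e ∈ E', ord e = ord' e + 1 := by
      intro e he
      have heM : e ∉ M := (Finset.mem_sdiff.mp he).2
      have heP : e ∉ P := fun h => heM (hPM h)
      simp [hord, heM, heP]
    have hordleB : ∀ f ∈ E, ord f ≤ B := by
      intro f hf
      by_cases hfP : f ∈ P
      · rw [hordP f hfP]; omega
      · by_cases hfM : f ∈ M
        · rw [hordM f hfM hfP]
        · have := hordlt f (Finset.mem_sdiff.mpr ⟨hf, hfM⟩)
          rw [hordE' f (Finset.mem_sdiff.mpr ⟨hf, hfM⟩)]
          omega
    have hEsplit : E = M ∪ E' := by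
      rw [hE']
      exact (Finset.union_sdiff_of_subset hME).symm
    have hdisjME' : Disjoint M E' := by
      rw [Finset.disjoint_right]
      exact fun a ha => (Finset.mem_sdiff.mp ha).2
    refine ⟨ord, ?_, ?_⟩
    · -- Good
      intro e he f hf hne hsh
      have hMM : e ∈ M → f ∈ M → False := by
        intro heM hfM
        have := hMm e heM f hfM hne
        rcases hsh with h | h
        · exact this.1 h
        · exact this.2 h
      by_cases heP : e ∈ P <;> by_cases hfP : f ∈ P
      · exact absurd (hMM (hPM heP) (hPM hfP)) not_false
      · by_cases hfM : f ∈ M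
        · exact absurd (hMM (hPM heP) hfM) not_false
        · have hfE' : f ∈ E' := Finset.mem_sdiff.mpr ⟨hf, hfM⟩
          rw [hordP e heP, hordE' f hfE']
          omega
      · by_cases heM : e ∈ M
        · exact absurd (hMM heM (hPM hfP)) not_false
        · have heE' : e ∈ E' := Finset.mem_sdiff.mpr ⟨he, heM⟩
          rw [hordP f hfP, hordE' e heE']
          omega
      · by_cases heM : e ∈ M <;> by_cases hfM : f ∈ M
        · exact absurd (hMM heM hfM) not_false
        · have hfE' : f ∈ E' := Finset.mem_sdiff.mpr ⟨hf, hfM⟩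
          rw [hordM e heM heP, hordE' f hfE']
          have := hordlt f hfE'
          omega
        · have heE' : e ∈ E' := Finset.mem_sdiff.mpr ⟨he, heM⟩
          rw [hordM f hfM hfP, hordE' e heE']
          have := hordlt e heE'
          omega
        · have heE' : e ∈ E' := Finset.mem_sdiff.mpr ⟨he, heM⟩
          have hfE' : f ∈ E' := Finset.mem_sdiff.mpr ⟨hf, hfM⟩
          rw [hordE' e heE', hordE' f hfE']
          have := hgood' e heE' f hfE' hne hsh
          omega
    · -- bounds
      intro e he
      by_cases heP : e ∈ P
      · -- pre edges
        have h0 : ord e = 0 := hordP e heP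
        have hcntL : cntL E ord e = 0 := by
          rw [cntL, Finset.card_eq_zero, Finset.filter_eq_empty_iff]
          intro f hf
          rw [h0]
          push_neg
          intro _
          omega
        have hcntR : cntR E ord e + 1 ≤ dR E e.2 := by
          have hsub : E.filter (fun f => f.2 = e.2 ∧ ord e < ord f)
              ⊆ (E.filter (fun f => f.2 = e.2)).erase e := by
            intro f hf
            obtain ⟨hfE, hf2, hlt⟩ := mem_filter.mp hf
            refine Finset.mem_erase.mpr ⟨?_, mem_filter.mpr ⟨hfE, hf2⟩⟩
            intro hfe
            rw [hfe] at hlt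
            omega
          have h1 := Finset.card_le_card hsub
          have h2 : ((E.filter (fun f => f.2 = e.2)).erase e).card = dR E e.2 - 1 :=
            Finset.card_erase_of_mem (mem_filter.mpr ⟨he, rfl⟩)
          have h3 := hdRpos e he
          rw [h2] at h1
          rw [cntR]
          omega
        rw [hcntL]
        calc 0 + cntR E ord e + 1 ≤ dR E e.2 := by omega
          _ ≤ _ := le_max_right _ _
      · by_cases heM : e ∈ M
        · -- app edges
          have h0 : ord e = B := hordM e heM heP
          have hcntR : cntR E ord e = 0 := by
            rw [cntR, Finset.card_eq_zero, Finset.filter_eq_empty_iff]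
            intro f hf
            push_neg
            intro _
            have := hordleB f hf
            rw [h0]
            omega
          have hcntL : cntL E ord e + 1 ≤ dL E e.1 := by
            have hsub : E.filter (fun f => f.1 = e.1 ∧ ord f < ord e)
                ⊆ (E.filter (fun f => f.1 = e.1)).erase e := by
              intro f hf
              obtain ⟨hfE, hf1, hlt⟩ := mem_filter.mp hf
              refine Finset.mem_erase.mpr ⟨?_, mem_filter.mpr ⟨hfE, hf1⟩⟩
              intro hfe
              rw [hfe] at hlt
              omega
            have h1 := Finset.card_le_card hsub
            have h2 : ((E.filter (fun f => f.1 = e.1)).erase e).card = dL E e.1 - 1 :=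
              Finset.card_erase_of_mem (mem_filter.mpr ⟨he, rfl⟩)
            have h3 := hdLpos e he
            rw [h2] at h1
            rw [cntL]
            omega
          rw [hcntR]
          calc cntL E ord e + 0 + 1 ≤ dL E e.1 := by omega
            _ ≤ _ := le_max_left _ _
        · -- old edges
          have heE' : e ∈ E' := Finset.mem_sdiff.mpr ⟨he, heM⟩
          have horde : ord e = ord' e + 1 := hordE' e heE'
          set glA : ℕ := (P.filter (fun f => f.1 = e.1)).card with hglA
          set grA : ℕ := ((M \ P).filter (fun f => f.2 = e.2)).card with hgrA
          have hsplitL : cntL E ord e = glA + cntL E' ord' e := by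
            have hfeq : E.filter (fun f => f.1 = e.1 ∧ ord f < ord e)
                = (P.filter (fun f => f.1 = e.1))
                  ∪ (E'.filter (fun f => f.1 = e.1 ∧ ord' f < ord' e)) := by
              apply Finset.Subset.antisymm
              · intro f hf
                obtain ⟨hfE, hf1, hlt⟩ := mem_filter.mp hf
                by_cases hfP : f ∈ P
                · exact Finset.mem_union_left _ (mem_filter.mpr ⟨hfP, hf1⟩)
                · by_cases hfM : f ∈ M
                  · rw [hordM f hfM hfP, horde] at hlt
                    have := hordlt e heE'
                    omega
                  · have hfE' : f ∈ E' := Finset.mem_sdiff.mpr ⟨hfE, hfM⟩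
                    rw [hordE' f hfE', horde] at hlt
                    exact Finset.mem_union_right _ (mem_filter.mpr ⟨hfE', hf1, by omega⟩)
              · intro f hf
                rcases Finset.mem_union.mp hf with hf | hf
                · obtain ⟨hfP, hf1⟩ := mem_filter.mp hf
                  refine mem_filter.mpr ⟨hME (hPM hfP), hf1, ?_⟩
                  rw [hordP f hfP, horde]
                  omega
                · obtain ⟨hfE', hf1, hlt⟩ := mem_filter.mp hf
                  refine mem_filter.mpr ⟨hE'sub hfE', hf1, ?_⟩
                  rw [hordE' f hfE', horde]
                  omega
            have hdj : Disjoint (P.filter (fun f => f.1 = e.1))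
                (E'.filter (fun f => f.1 = e.1 ∧ ord' f < ord' e)) := by
              rw [Finset.disjoint_left]
              intro a ha ha'
              exact (Finset.mem_sdiff.mp (mem_filter.mp ha').1).2 (hPM (mem_filter.mp ha).1)
            rw [cntL, hfeq, Finset.card_union_of_disjoint hdj]
            rfl
          have hsplitR : cntR E ord e = grA + cntR E' ord' e := by
            have hfeq : E.filter (fun f => f.2 = e.2 ∧ ord e < ord f)
                = ((M \ P).filter (fun f => f.2 = e.2))
                  ∪ (E'.filter (fun f => f.2 = e.2 ∧ ord' e < ord' f)) := by
              apply Finset.Subset.antisymm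
              · intro f hf
                obtain ⟨hfE, hf2, hlt⟩ := mem_filter.mp hf
                by_cases hfP : f ∈ P
                · rw [hordP f hfP, horde] at hlt
                  omega
                · by_cases hfM : f ∈ M
                  · exact Finset.mem_union_left _
                      (mem_filter.mpr ⟨Finset.mem_sdiff.mpr ⟨hfM, hfP⟩, hf2⟩)
                  · have hfE' : f ∈ E' := Finset.mem_sdiff.mpr ⟨hfE, hfM⟩
                    rw [hordE' f hfE', horde] at hlt
                    exact Finset.mem_union_right _ (mem_filter.mpr ⟨hfE', hf2, by omega⟩)
              · intro f hf
                rcases Finset.mem_union.mp hf with hf | hf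
                · obtain ⟨hfMP, hf2⟩ := mem_filter.mp hf
                  obtain ⟨hfM, hfP⟩ := Finset.mem_sdiff.mp hfMP
                  refine mem_filter.mpr ⟨hME hfM, hf2, ?_⟩
                  rw [hordM f hfM hfP, horde]
                  have := hordlt e heE'
                  omega
                · obtain ⟨hfE', hf2, hlt⟩ := mem_filter.mp hf
                  refine mem_filter.mpr ⟨hE'sub hfE', hf2, ?_⟩
                  rw [hordE' f hfE', horde]
                  omega
            have hdj : Disjoint ((M \ P).filter (fun f => f.2 = e.2))
                (E'.filter (fun f => f.2 = e.2 ∧ ord' e < ord' f)) := by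
              rw [Finset.disjoint_left]
              intro a ha ha'
              exact (Finset.mem_sdiff.mp (mem_filter.mp ha').1).2
                (Finset.mem_sdiff.mp (mem_filter.mp ha).1).1
            rw [cntR, hfeq, Finset.card_union_of_disjoint hdj]
            rfl
          have hglA1 : glA ≤ 1 := by
            refine Finset.card_le_one.mpr ?_
            intro a ha b hb
            by_contra hne
            exact (hMm a (hPM (mem_filter.mp ha).1) b (hPM (mem_filter.mp hb).1) hne).1
              ((mem_filter.mp ha).2.trans (mem_filter.mp hb).2.symm)
          have hgrA1 : grA ≤ 1 := by
            refine Finset.card_le_one.mpr ?_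
            intro a ha b hb
            by_contra hne
            exact (hMm a (Finset.mem_sdiff.mp (mem_filter.mp ha).1).1
              b (Finset.mem_sdiff.mp (mem_filter.mp hb).1).1 hne).2
              ((mem_filter.mp ha).2.trans (mem_filter.mp hb).2.symm)
          have hnotboth : ¬ (0 < glA ∧ 0 < grA) := by
            rintro ⟨h1, h2⟩
            obtain ⟨m, hm⟩ := Finset.card_pos.mp h1
            obtain ⟨m', hm'⟩ := Finset.card_pos.mp h2
            obtain ⟨hmP, hm1⟩ := mem_filter.mp hm
            obtain ⟨hm'MP, hm'2⟩ := mem_filter.mp hm'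
            obtain ⟨hm'M, hm'P⟩ := Finset.mem_sdiff.mp hm'MP
            refine hm'P (keyclosure m hmP m' ⟨hm'M, e, he, heM, ?_, ?_⟩)
            · exact hm1.symm
            · exact hm'2.symm
          -- degree decompositions
          have hdLs : ∀ v, dL E v = (M.filter (fun m => m.1 = v)).card + dL E' v := by
            intro v
            rw [dL, dL]
            conv_lhs => rw [hEsplit]
            rw [Finset.filter_union, Finset.card_union_of_disjoint
              (Finset.disjoint_filter_filter hdisjME')]
          have hdRs : ∀ v, dR E v = (M.filter (fun m => m.2 = v)).card + dR E' v := by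
            intro v
            rw [dR, dR]
            conv_lhs => rw [hEsplit]
            rw [Finset.filter_union, Finset.card_union_of_disjoint
              (Finset.disjoint_filter_filter hdisjME')]
          have hIHe := hbound' e heE'
          rw [hsplitL, hsplitR]
          rcases Nat.eq_zero_or_pos glA with hgl0 | hglpos
          · rcases Nat.eq_zero_or_pos grA with hgr0 | hgrpos
            · -- no gains
              have hmono : max (dL E' e.1) (dR E' e.2) ≤ max (dL E e.1) (dR E e.2) := by
                refine max_le_max ?_ ?_
                · rw [hdLs e.1]; omega
                · rw [hdRs e.2]; omega
              rw [hgl0, hgr0]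
              calc 0 + cntL E' ord' e + (0 + cntR E' ord' e) + 1
                  = cntL E' ord' e + cntR E' ord' e + 1 := by omega
                _ ≤ max (dL E' e.1) (dR E' e.2) := hIHe
                _ ≤ _ := hmono
            · -- gain on the right only
              obtain ⟨m', hm'⟩ := Finset.card_pos.mp hgrpos
              obtain ⟨hm'MP, hm'2⟩ := mem_filter.mp hm'
              obtain ⟨hm'M, hm'P⟩ := Finset.mem_sdiff.mp hm'MP
              have hURe : dR E e.2 = Δ := hm'2 ▸ keyUR m' hm'M hm'P
              have hc1 : 1 ≤ (M.filter (fun m => m.2 = e.2)).card :=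
                Finset.card_pos.mpr ⟨m', mem_filter.mpr ⟨hm'M, hm'2⟩⟩
              have hdR' : dR E' e.2 ≤ Δ - 1 := by
                have := hdRs e.2
                omega
              have hdL' : dL E' e.1 ≤ Δ - 1 := by
                by_cases hQ : dL E e.1 = Δ
                · obtain ⟨mm, hmm, hmm1⟩ := hMcovL e.1 hQ
                  have hc2 : 1 ≤ (M.filter (fun m => m.1 = e.1)).card :=
                    Finset.card_pos.mpr ⟨mm, mem_filter.mpr ⟨hmm, hmm1⟩⟩
                  have := hdLs e.1
                  omega
                · have h1 := hdLle e.1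
                  have h2 := hdLs e.1
                  omega
              have hmaxle : max (dL E' e.1) (dR E' e.2) ≤ Δ - 1 := max_le hdL' hdR'
              have hfin : cntL E' ord' e + cntR E' ord' e + 1 ≤ Δ - 1 :=
                le_trans hIHe hmaxle
              have hΔle : Δ ≤ max (dL E e.1) (dR E e.2) :=
                le_trans (le_of_eq hURe.symm) (le_max_right _ _)
              have hgoal : glA + cntL E' ord' e + (grA + cntR E' ord' e) + 1 ≤ Δ := by
                omega
              exact le_trans hgoal hΔle
          · -- gain on the left (and none on the right)
            have hgr0 : grA = 0 := by omega
            obtain ⟨m, hm⟩ := Finset.card_pos.mp hglpos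
            obtain ⟨hmP, hm1⟩ := mem_filter.mp hm
            have hULe : dL E e.1 = Δ := hm1 ▸ keyUL m hmP
            have hc1 : 1 ≤ (M.filter (fun x => x.1 = e.1)).card :=
              Finset.card_pos.mpr ⟨m, mem_filter.mpr ⟨hPM hmP, hm1⟩⟩
            have hdL' : dL E' e.1 ≤ Δ - 1 := by
              have := hdLs e.1
              omega
            have hdR' : dR E' e.2 ≤ Δ - 1 := by
              by_cases hQ : dR E e.2 = Δ
              · obtain ⟨mm, hmm, hmm2⟩ := hMcovR e.2 hQ
                have hc2 : 1 ≤ (M.filter (fun x => x.2 = e.2)).card :=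
                  Finset.card_pos.mpr ⟨mm, mem_filter.mpr ⟨hmm, hmm2⟩⟩
                have := hdRs e.2
                omega
              · have h1 := hdRle e.2
                have h2 := hdRs e.2
                omega
            have hmaxle : max (dL E' e.1) (dR E' e.2) ≤ Δ - 1 := max_le hdL' hdR'
            have hfin : cntL E' ord' e + cntR E' ord' e + 1 ≤ Δ - 1 :=
              le_trans hIHe hmaxle
            have hΔle : Δ ≤ max (dL E e.1) (dR E e.2) :=
              le_trans (le_of_eq hULe.symm) (le_max_left _ _)
            have hgoal : glA + cntL E' ord' e + (grA + cntR E' ord' e) + 1 ≤ Δ := by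
              omega
            exact le_trans hgoal hΔle

end TLC

open SimpleGraph

/-- A finite bipartite graph `G` with a total list assignment `L` giving each edge `xy`
at least `max (deg x + 2) (deg y + 2)` colors is totally `L`-colorable, provided its
vertices admit a proper coloring from their lists. -/
theorem bipartite_total_list_coloring
    {V : Type*} [Fintype V] [DecidableEq V] (G : SimpleGraph V) [DecidableRel G.Adj]
    (hbip : G.Colorable 2)
    {α : Type*} [DecidableEq α] (Lv : V → Finset α) (Le : Sym2 V → Finset α)
    (hLe : ∀ ⦃x y⦄, G.Adj x y →
      max (G.degree x + 2) (G.degree y + 2) ≤ (Le s(x, y)).card)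
    (hvert : ∃ c : V → α, (∀ v, c v ∈ Lv v) ∧ ∀ ⦃u v⦄, G.Adj u v → c u ≠ c v) :
    ∃ (fv : V → α) (fe : Sym2 V → α),
      (∀ v, fv v ∈ Lv v) ∧
      (∀ e ∈ G.edgeSet, fe e ∈ Le e) ∧
      IsTotalColoring G fv fe := by
  classical
  obtain ⟨c, hcmem, hcprop⟩ := hvert
  by_cases hV : Nonempty V
  case neg =>
    haveI : IsEmpty V := not_nonempty_iff.mp hV
    refine ⟨c, fun e => isEmptyElim (Quot.out e).1, fun v => isEmptyElim v, ?_, ?_, ?_, ?_⟩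
    · intro e he
      exact isEmptyElim (Quot.out e).1
    · intro u; exact isEmptyElim u
    · intro u; exact isEmptyElim u
    · intro u; exact isEmptyElim u
  case pos =>
  haveI : Nonempty α := ⟨c (Classical.arbitrary V)⟩
  obtain ⟨Cb⟩ := hbip
  -- basic facts about the 2-coloring
  have hCbne : ∀ ⦃x y⦄, G.Adj x y → Cb x ≠ Cb y := fun x y h => Cb.valid h
  have hfin2 : ∀ a b : Fin 2, a ≠ b → a = 0 → b = 1 := by decide
  have hfin2' : ∀ a b : Fin 2, a ≠ b → a = 0 ∨ b = 0 := by decide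
  have hfin2'' : ∀ a b : Fin 2, a ≠ b → b = 0 → a = 1 := by decide
  have hfin3 : ∀ a b : Fin 2, a ≠ b → a = 1 → b = 0 := by decide
  set E : Finset (V × V) :=
    Finset.univ.filter (fun p : V × V => G.Adj p.1 p.2 ∧ Cb p.1 = 0) with hE
  have hmemE : ∀ p : V × V, p ∈ E ↔ G.Adj p.1 p.2 ∧ Cb p.1 = 0 := by
    intro p
    simp [hE]
  -- degrees agree
  have hdL : ∀ p ∈ E, TLC.dL E p.1 = G.degree p.1 := by
    intro p hp
    obtain ⟨hadj, hc0⟩ := (hmemE p).mp hp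
    have : E.filter (fun f => f.1 = p.1) = (G.neighborFinset p.1).image (fun w => (p.1, w)) := by
      apply Finset.Subset.antisymm
      · intro f hf
        obtain ⟨hfE, hf1⟩ := Finset.mem_filter.mp hf
        obtain ⟨hadjf, _⟩ := (hmemE f).mp hfE
        refine Finset.mem_image.mpr ⟨f.2, ?_, ?_⟩
        · rw [SimpleGraph.mem_neighborFinset]
          exact hf1 ▸ hadjf
        · exact Prod.ext hf1.symm rfl
      · intro f hf
        obtain ⟨w, hw, rfl⟩ := Finset.mem_image.mp hf
        rw [SimpleGraph.mem_neighborFinset] at hw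
        exact Finset.mem_filter.mpr ⟨(hmemE _).mpr ⟨hw, hc0⟩, rfl⟩
    rw [TLC.dL, this, Finset.card_image_of_injective _ (fun a b h => (Prod.ext_iff.mp h).2),
      SimpleGraph.card_neighborFinset_eq_degree]
  have hdR : ∀ p ∈ E, TLC.dR E p.2 = G.degree p.2 := by
    intro p hp
    obtain ⟨hadj, hc0⟩ := (hmemE p).mp hp
    have hc1 : Cb p.2 = 1 := hfin2 _ _ (hCbne hadj) hc0
    have : E.filter (fun f => f.2 = p.2) = (G.neighborFinset p.2).image (fun w => (w, p.2)) := by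
      apply Finset.Subset.antisymm
      · intro f hf
        obtain ⟨hfE, hf2⟩ := Finset.mem_filter.mp hf
        obtain ⟨hadjf, _⟩ := (hmemE f).mp hfE
        refine Finset.mem_image.mpr ⟨f.1, ?_, ?_⟩
        · rw [SimpleGraph.mem_neighborFinset]
          exact (hf2 ▸ hadjf).symm
        · exact Prod.ext rfl hf2.symm
      · intro f hf
        obtain ⟨w, hw, rfl⟩ := Finset.mem_image.mp hf
        rw [SimpleGraph.mem_neighborFinset] at hw
        have hwc : Cb w = 0 := hfin3 _ _ (hCbne hw) hc1
        exact Finset.mem_filter.mpr ⟨(hmemE _).mpr ⟨hw.symm, hwc⟩, rfl⟩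
    rw [TLC.dR, this, Finset.card_image_of_injective _ (fun a b h => (Prod.ext_iff.mp h).1),
      SimpleGraph.card_neighborFinset_eq_degree]
  -- the edge lists
  set L : V × V → Finset α := fun p => (Le s(p.1, p.2)) \ {c p.1, c p.2} with hL
  obtain ⟨ord, hgood, hbound⟩ := TLC.exists_ord E.card E rfl
  have hLcard : ∀ p ∈ E, TLC.cntL E ord p + TLC.cntR E ord p + 1 ≤ (L p).card := by
    intro p hp
    obtain ⟨hadj, hc0⟩ := (hmemE p).mp hp
    have h1 := hbound p hp
    rw [hdL p hp, hdR p hp] at h1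
    have h2 : max (G.degree p.1) (G.degree p.2) + 2 ≤ (Le s(p.1, p.2)).card := by
      rcases max_cases (G.degree p.1) (G.degree p.2) with ⟨hmx, _⟩ | ⟨hmx, _⟩
      · rw [hmx]
        exact le_trans (le_max_left _ _) (hLe hadj)
      · rw [hmx]
        exact le_trans (le_max_right _ _) (hLe hadj)
    have h3 : (Le s(p.1, p.2)).card ≤ (L p).card + 2 := by
      calc (Le s(p.1, p.2)).card
          ≤ (L p).card + ({c p.1, c p.2} : Finset α).card :=
            Finset.card_le_card_sdiff_add_card
        _ ≤ (L p).card + 2 := by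
            have := Finset.card_insert_le (c p.1) ({c p.2} : Finset α)
            simp only [Finset.card_singleton] at this
            omega
    omega
  obtain ⟨col, hcolmem, hcolprop⟩ := TLC.listcolor ord E.card E rfl hgood L hLcard
  -- the edge coloring on Sym2
  set fe : Sym2 V → α := fun e =>
    if Cb (Quot.out e).1 = 0 then col (Quot.out e)
    else col ((Quot.out e).2, (Quot.out e).1) with hfe
  have hout : ∀ x y : V, (Quot.out s(x, y)) = (x, y) ∨ (Quot.out s(x, y)) = (y, x) := by
    intro x y
    have h1 : s((Quot.out s(x, y)).1, (Quot.out s(x, y)).2) = s(x, y) := by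
      exact Quot.out_eq _
    rcases (Sym2.mk_eq_mk_iff (p := Quot.out s(x, y)) (q := (x, y))).mp h1 with h | h
    · exact Or.inl h
    · right
      rw [Prod.ext_iff] at h
      exact Prod.ext h.1 h.2
  have hfekey : ∀ x y, G.Adj x y → Cb x = 0 → fe s(x, y) = col (x, y) := by
    intro x y hadj hc0
    have hc1 : Cb y = 1 := hfin2 _ _ (hCbne hadj) hc0
    rcases hout x y with h | h
    · rw [hfe]
      simp only [h]
      exact if_pos hc0
    · rw [hfe]
      simp only [h]
      have hny : ¬ (Cb y = 0) := by rw [hc1]; exact one_ne_zero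
      rw [if_neg hny]
  have hpairE : ∀ x y, G.Adj x y → Cb x = 0 → (x, y) ∈ E :=
    fun x y hadj hc0 => (hmemE (x, y)).mpr ⟨hadj, hc0⟩
  have hLsub : ∀ p, L p ⊆ Le s(p.1, p.2) := fun p => Finset.sdiff_subset
  refine ⟨c, fe, hcmem, ?_, hcprop, ?_, ?_⟩
  · -- edge colors from lists
    intro e he
    induction e using Sym2.ind with
    | _ x y =>
      have hadj : G.Adj x y := he
      rcases hfin2' _ _ (hCbne hadj) with h0 | h0
      · rw [hfekey x y hadj h0]
        exact hLsub (x, y) (hcolmem (x, y) (hpairE x y hadj h0))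
      · have hswap : s(x, y) = s(y, x) := Sym2.eq_swap
        rw [hswap, hfekey y x hadj.symm h0]
        exact hLsub (y, x) (hcolmem (y, x) (hpairE y x hadj.symm h0))
  · -- adjacent edges get distinct colors
    intro u v w hadjv hadjw hvw
    rcases hfin2' _ _ (hCbne hadjv) with h0 | h0
    · rw [hfekey u v hadjv h0, hfekey u w hadjw h0]
      exact hcolprop (u, v) (hpairE u v hadjv h0) (u, w) (hpairE u w hadjw h0)
        (fun h => hvw (Prod.ext_iff.mp h).2) (Or.inl rfl)
    · have hu1 : Cb u = 1 := hfin2'' _ _ (hCbne hadjv) h0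
      have h0w : Cb w = 0 := by
        rcases hfin2' _ _ (hCbne hadjw) with h | h
        · rw [h] at hu1
          exact absurd hu1 (by decide)
        · exact h
      have hswv : s(u, v) = s(v, u) := Sym2.eq_swap
      have hsww : s(u, w) = s(w, u) := Sym2.eq_swap
      rw [hswv, hsww, hfekey v u hadjv.symm h0, hfekey w u hadjw.symm h0w]
      exact hcolprop (v, u) (hpairE v u hadjv.symm h0) (w, u) (hpairE w u hadjw.symm h0w)
        (fun h => hvw (Prod.ext_iff.mp h).1) (Or.inr rfl)
  · -- edge color distinct from endpoint color
    intro u v hadj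
    rcases hfin2' _ _ (hCbne hadj) with h0 | h0
    · rw [hfekey u v hadj h0]
      have := hcolmem (u, v) (hpairE u v hadj h0)
      rw [hL] at this
      have h2 := (Finset.mem_sdiff.mp this).2
      intro hcontr
      exact h2 (by rw [hcontr]; exact Finset.mem_insert_self _ _)
    · have hswap : s(u, v) = s(v, u) := Sym2.eq_swap
      rw [hswap, hfekey v u hadj.symm h0]
      have := hcolmem (v, u) (hpairE v u hadj.symm h0)
      rw [hL] at this
      have h2 := (Finset.mem_sdiff.mp this).2
      intro hcontr
      exact h2 (by rw [hcontr]; exact Finset.mem_insert.mpr (Or.inr (Finset.mem_singleton_self _)))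
end
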